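/- arXiv:2008.11025 — 8 statements merged into one kernel-verified Lean document; each statement's English description precedes it below -/
import Mathlib

section
/- Let u, v ∈ U with ū, v̄ ∈ Z(Ū). Then [u,v] = h·c for some c ∈ U whose class c̄ lies in Z(Ū), and [D_u, D_v] = D_c (that is, [D_u, D_v] = D_{[u,v]/h}). Consequently, the set L := { D_v : v ∈ U, v̄ ∈ Z(Ū) } is a Lie subalgebra of the Lie algebra of ℂ-linear derivations of Ū. -/
/-!
Write `[x, y] = h·z` as `z = [x, y]/h`; this quotient is well defined because `h` is central and
regular. For `p`, `q` central modulo `h` and `c = [p, q]/h`, the Jacobi identity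
`[[p, q], b] = [p, [q, b]] - [q, [p, b]]`, divided by `h²`, reads
`[c, b]/h = [p, [q, b]/h]/h - [q, [p, b]/h]/h`.
Since every `[x, b]` with `x̄` central lies in `hU`, this shows at once that `c̄` is central
and that `D_c = D_p D_q - D_q D_p`. The Leibniz rule for `D_a` is
`[a, bb'] = [a, b]b' + b[a, b']` divided by `h`.
-/

section DividedCommutator

variable {U R F : Type*} [Ring U] [Ring R] [FunLike F U R] [RingHomClass F U R] {H : U} {π : F}

theorem mul_lie_of_commute (hH : ∀ x, Commute H x) (x y : U) :
    ⁅H * x, y⁆ = H * ⁅x, y⁆ := by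
  rw [Ring.lie_def, Ring.lie_def, mul_sub, mul_assoc, ← mul_assoc y, ← (hH y).eq, mul_assoc]

theorem lie_mul_of_commute (hH : ∀ x, Commute H x) (x y : U) :
    ⁅x, H * y⁆ = H * ⁅x, y⁆ := by
  rw [Ring.lie_def, Ring.lie_def, mul_sub, ← mul_assoc x, ← (hH x).eq, mul_assoc, mul_assoc]

theorem lie_eq_mul_sub_of_lie_eq_mul (hH : ∀ x, Commute H x) (hreg : IsLeftRegular H)
    {p q b c s t s' t' : U} (hc : ⁅p, q⁆ = H * c)
    (hs : ⁅q, b⁆ = H * s) (hs' : ⁅p, s⁆ = H * s')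
    (ht : ⁅p, b⁆ = H * t) (ht' : ⁅q, t⁆ = H * t') :
    ⁅c, b⁆ = H * (s' - t') := by
  apply hreg
  calc H * ⁅c, b⁆ = ⁅⁅p, q⁆, b⁆ := by rw [hc, mul_lie_of_commute hH]
    _ = ⁅p, ⁅q, b⁆⁆ - ⁅q, ⁅p, b⁆⁆ := by simp only [Ring.lie_def]; noncomm_ring
    _ = H * (H * (s' - t')) := by
      rw [hs, ht, lie_mul_of_commute hH, lie_mul_of_commute hH, hs', ht', mul_sub H s', mul_sub]

theorem exists_lie_eq_mul (hker : ∀ x, π x = 0 → ∃ y, x = H * y) {a : U}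
    (ha : ∀ t, π a * t = t * π a) (b : U) : ∃ w, ⁅a, b⁆ = H * w :=
  hker _ (by rw [Ring.lie_def, map_sub, map_mul, map_mul, ha, sub_self])

theorem central_of_lie_eq_mul (hH : ∀ x, Commute H x) (hreg : IsLeftRegular H)
    (hker : ∀ x, π x = 0 → ∃ y, x = H * y) (hπH : π H = 0) (hπ : Function.Surjective π)
    {p q c : U} (hp : ∀ t, π p * t = t * π p) (hq : ∀ t, π q * t = t * π q)
    (hc : ⁅p, q⁆ = H * c) (t : R) : π c * t = t * π c := by
  obtain ⟨b, rfl⟩ := hπ t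
  obtain ⟨s, hs⟩ := exists_lie_eq_mul hker hq b
  obtain ⟨s', hs'⟩ := exists_lie_eq_mul hker hp s
  obtain ⟨t, ht⟩ := exists_lie_eq_mul hker hp b
  obtain ⟨t', ht'⟩ := exists_lie_eq_mul hker hq t
  have hcb := congr_arg π (lie_eq_mul_sub_of_lie_eq_mul hH hreg hc hs hs' ht ht')
  rwa [Ring.lie_def, map_sub, map_mul, map_mul, map_mul, hπH, zero_mul, sub_eq_zero] at hcb

/-- `D` is the derivation `D_a` of the quotient: it maps `π b` to `π (⁅a, b⁆ / H)`. -/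
def IsDividedAd (H : U) (π : F) (a : U) (D : R → R) : Prop :=
  ∀ b w, ⁅a, b⁆ = H * w → D (π b) = π w

namespace IsDividedAd

variable {a : U} {D : R → R}

theorem eq (hker : ∀ x, π x = 0 → ∃ y, x = H * y) (hπ : Function.Surjective π)
    (ha : ∀ t, π a * t = t * π a) {D' : R → R} (hD : IsDividedAd H π a D)
    (hD' : IsDividedAd H π a D') (y : R) : D y = D' y := by
  obtain ⟨b, rfl⟩ := hπ y
  obtain ⟨w, hw⟩ := exists_lie_eq_mul hker ha b
  rw [hD b w hw, hD' b w hw]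

theorem leibniz (hH : ∀ x, Commute H x) (hker : ∀ x, π x = 0 → ∃ y, x = H * y)
    (hπ : Function.Surjective π) (ha : ∀ t, π a * t = t * π a) (hD : IsDividedAd H π a D)
    (x y : R) : D (x * y) = D x * y + x * D y := by
  obtain ⟨b, rfl⟩ := hπ x
  obtain ⟨b', rfl⟩ := hπ y
  obtain ⟨w, hw⟩ := exists_lie_eq_mul hker ha b
  obtain ⟨w', hw'⟩ := exists_lie_eq_mul hker ha b'
  have hbb' : ⁅a, b * b'⁆ = H * (w * b' + b * w') := by
    calc ⁅a, b * b'⁆ = ⁅a, b⁆ * b' + b * ⁅a, b'⁆ := by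
          simp only [Ring.lie_def]; noncomm_ring
      _ = H * (w * b' + b * w') := by
          rw [hw, hw', mul_add, mul_assoc, ← mul_assoc b, ← (hH b).eq, mul_assoc]
  have := hD _ _ hbb'
  rwa [map_mul, map_add, map_mul, map_mul, ← hD b w hw, ← hD b' w' hw'] at this

theorem commutator (hH : ∀ x, Commute H x) (hreg : IsLeftRegular H)
    (hker : ∀ x, π x = 0 → ∃ y, x = H * y) {p q c : U} {D D' : R → R}
    (hp : ∀ t, π p * t = t * π p) (hq : ∀ t, π q * t = t * π q)
    (hD : IsDividedAd H π p D) (hD' : IsDividedAd H π q D') (hc : ⁅p, q⁆ = H * c) :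
    IsDividedAd H π c (fun y => D (D' y) - D' (D y)) := by
  intro b w hw
  show D (D' (π b)) - D' (D (π b)) = π w
  obtain ⟨s, hs⟩ := exists_lie_eq_mul hker hq b
  obtain ⟨s', hs'⟩ := exists_lie_eq_mul hker hp s
  obtain ⟨t, ht⟩ := exists_lie_eq_mul hker hp b
  obtain ⟨t', ht'⟩ := exists_lie_eq_mul hker hq t
  have hw' : w = s' - t' :=
    hreg (hw.symm.trans (lie_eq_mul_sub_of_lie_eq_mul hH hreg hc hs hs' ht ht'))
  rw [hw', map_sub, hD' b s hs, hD s s' hs', hD b t ht, hD' t t' ht']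

end IsDividedAd

end DividedCommutator

theorem stmt5_general
    (A : Type*) [CommRing A] (h : A)
    (U : Type*) [Ring U] [Algebra ℂ U] [Algebra A U]
    (hreg : ∀ x : U, algebraMap A U h * x = 0 → x = 0)
    (Ubar : Type*) [Ring Ubar] [Algebra ℂ Ubar]
    (π : U →ₐ[ℂ] Ubar) (hπ : Function.Surjective π)
    (hker : ∀ x : U, π x = 0 ↔ ∃ y : U, x = algebraMap A U h * y)
    (u v : U) (hu : ∀ t : Ubar, π u * t = t * π u) (hv : ∀ t : Ubar, π v * t = t * π v) :
    (∃ c : U, u * v - v * u = algebraMap A U h * c ∧ ∀ t : Ubar, π c * t = t * π c) ∧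
    (∀ (c : U) (Du Dv Dc : Ubar →ₗ[ℂ] Ubar),
        u * v - v * u = algebraMap A U h * c →
        (∀ a w : U, u * a - a * u = algebraMap A U h * w → Du (π a) = π w) →
        (∀ a w : U, v * a - a * v = algebraMap A U h * w → Dv (π a) = π w) →
        (∀ a w : U, c * a - a * c = algebraMap A U h * w → Dc (π a) = π w) →
        ∀ y : Ubar, Du (Dv y) - Dv (Du y) = Dc y) ∧
    -- every element of L is a derivation of Ū …
    (∀ D : Ubar →ₗ[ℂ] Ubar,
        (∃ a : U, (∀ t : Ubar, π a * t = t * π a) ∧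
            ∀ b w : U, a * b - b * a = algebraMap A U h * w → D (π b) = π w) →
        ∀ x y : Ubar, D (x * y) = D x * y + x * D y) ∧
    -- … and L is closed under the commutator bracket
    (∀ D D' : Ubar →ₗ[ℂ] Ubar,
        (∃ a : U, (∀ t : Ubar, π a * t = t * π a) ∧
            ∀ b w : U, a * b - b * a = algebraMap A U h * w → D (π b) = π w) →
        (∃ a : U, (∀ t : Ubar, π a * t = t * π a) ∧
            ∀ b w : U, a * b - b * a = algebraMap A U h * w → D' (π b) = π w) →
        ∃ a : U, (∀ t : Ubar, π a * t = t * π a) ∧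
          ∀ b w : U, a * b - b * a = algebraMap A U h * w →
            (D ∘ₗ D' - D' ∘ₗ D) (π b) = π w) := by
  have hH := Algebra.commute_algebraMap_left (A := U) h
  have hreg' := isLeftRegular_iff_right_eq_zero_of_mul.mpr hreg
  have hker' x := (hker x).mp
  have hπH : π (algebraMap A U h) = 0 := (hker _).mpr ⟨1, (mul_one _).symm⟩
  refine ⟨?_, ?_, ?_, ?_⟩
  · obtain ⟨c, hc⟩ := exists_lie_eq_mul hker' hu v
    exact ⟨c, hc, central_of_lie_eq_mul hH hreg' hker' hπH hπ hu hv hc⟩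
  · intro c Du Dv Dc hc hDu hDv hDc
    exact IsDividedAd.eq hker' hπ (central_of_lie_eq_mul hH hreg' hker' hπH hπ hu hv hc)
      (IsDividedAd.commutator hH hreg' hker' hu hv hDu hDv hc) hDc
  · rintro D ⟨a, ha, hD⟩
    exact IsDividedAd.leibniz hH hker' hπ ha hD
  · rintro D D' ⟨a, ha, hD⟩ ⟨a', ha', hD'⟩
    obtain ⟨c, hc⟩ := exists_lie_eq_mul hker' ha a'
    exact ⟨c, central_of_lie_eq_mul hH hreg' hker' hπH hπ ha ha' hc,
      IsDividedAd.commutator hH hreg' hker' ha ha' hD hD' hc⟩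

/-- `[u,v] = h·c` with `c̄` central, `[D_u, D_v] = D_c`, and the set
`L = { D_v : v̄ ∈ Z(Ū) }` is a Lie subalgebra of the derivations of `Ū`. -/
theorem stmt5
    (A : Type*) [CommRing A] [Algebra ℂ A] (h : A)
    (hA : Function.Bijective (algebraMap ℂ (A ⧸ Ideal.span {h})))
    (U : Type*) [Ring U] [Algebra ℂ U] [Algebra A U] [IsScalarTower ℂ A U]
    (hreg : ∀ x : U, algebraMap A U h * x = 0 → x = 0)
    (Ubar : Type*) [Ring Ubar] [Algebra ℂ Ubar]
    (π : U →ₐ[ℂ] Ubar) (hπ : Function.Surjective π)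
    (hker : ∀ x : U, π x = 0 ↔ ∃ y : U, x = algebraMap A U h * y)
    (u v : U) (hu : ∀ t : Ubar, π u * t = t * π u) (hv : ∀ t : Ubar, π v * t = t * π v) :
    (∃ c : U, u * v - v * u = algebraMap A U h * c ∧ ∀ t : Ubar, π c * t = t * π c) ∧
    (∀ (c : U) (Du Dv Dc : Ubar →ₗ[ℂ] Ubar),
        u * v - v * u = algebraMap A U h * c →
        (∀ a w : U, u * a - a * u = algebraMap A U h * w → Du (π a) = π w) →
        (∀ a w : U, v * a - a * v = algebraMap A U h * w → Dv (π a) = π w) →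
        (∀ a w : U, c * a - a * c = algebraMap A U h * w → Dc (π a) = π w) →
        ∀ y : Ubar, Du (Dv y) - Dv (Du y) = Dc y) ∧
    -- every element of L is a derivation of Ū …
    (∀ D : Ubar →ₗ[ℂ] Ubar,
        (∃ a : U, (∀ t : Ubar, π a * t = t * π a) ∧
            ∀ b w : U, a * b - b * a = algebraMap A U h * w → D (π b) = π w) →
        ∀ x y : Ubar, D (x * y) = D x * y + x * D y) ∧
    -- … and L is closed under the commutator bracket
    (∀ D D' : Ubar →ₗ[ℂ] Ubar,
        (∃ a : U, (∀ t : Ubar, π a * t = t * π a) ∧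
            ∀ b w : U, a * b - b * a = algebraMap A U h * w → D (π b) = π w) →
        (∃ a : U, (∀ t : Ubar, π a * t = t * π a) ∧
            ∀ b w : U, a * b - b * a = algebraMap A U h * w → D' (π b) = π w) →
        ∃ a : U, (∀ t : Ubar, π a * t = t * π a) ∧
          ∀ b w : U, a * b - b * a = algebraMap A U h * w →
            (D ∘ₗ D' - D' ∘ₗ D) (π b) = π w) :=
  stmt5_general A h U hreg Ubar π hπ hker u v hu hv
end

section
/- Every derivation in L := { D_v : v ∈ U, v̄ ∈ Z } maps Z := Z(Ū) into Z, and L' := { {z, −}|_Z : z ∈ Z } is a Lie subalgebra of the Lie algebra of ℂ-derivations of Z. The restriction map ρ : L → L', D_u ↦ {ū, −}|_Z, is a well-defined surjective Lie algebra homomorphism whose kernel contains all inner derivations of Ū (each inner derivation of Ū lies in L and restricts to 0 on Z). Moreover, if every Casimir element of Z (i.e., every z ∈ Z with {z, y} = 0 for all y ∈ Z) is a scalar multiple of 1, then the kernel of ρ consists exactly of the inner derivations of Ū. -/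
/-!
Every step is an identity in `U` that is multiplied by the central regular element `h` and then
cancelled. Dividing the Jacobi identity `[[a, v], u] = [a, [v, u]] + [[a, u], v]` by `h` shows that
the class of `[a, v] / h` is central whenever `ā` and `v̄` are; hence each `D_a` preserves `Z`,
agrees there with `{ā, −}`, and the Hamiltonian derivations are closed under commutators.
If `D_a` vanishes on `Z`, then `ā` is a Casimir, hence a scalar `c`; so `a = c + h a₀`, and
`[a, v] = h [a₀, v]` exhibits `D_a` as the inner derivation `[ā₀, −]`.
-/

section Commutators

variable {U Ubar F : Type*} [Ring U] [Ring Ubar] [FunLike F U Ubar] [RingHomClass F U Ubar]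
  {π : F} {H : U}

theorem commutator_mul_left (hH : ∀ x : U, H * x = x * H) (a v : U) :
    H * a * v - v * (H * a) = H * (a * v - v * a) := by
  rw [← mul_assoc v H a, ← hH v, mul_assoc H v a, mul_assoc H a v, mul_sub]

theorem commutator_mul_right (hH : ∀ x : U, H * x = x * H) (a v : U) :
    a * (H * v) - H * v * a = H * (a * v - v * a) := by
  rw [← mul_assoc a H v, ← hH a, mul_assoc H a v, mul_assoc H v a, mul_sub]

/-- Dividing the Jacobi identity `[[a, v], u] = [a, [v, u]] + [[a, u], v]` by `H`. -/
theorem commutator_eq_of_commutator_eq_mul (hH : ∀ x : U, H * x = x * H)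
    (hreg : IsLeftRegular H) {a v u w s r : U} (hw : a * v - v * a = H * w)
    (hs : v * u - u * v = H * s) (hr : a * u - u * a = H * r) :
    w * u - u * w = (a * s - s * a) + (r * v - v * r) := by
  apply hreg
  beta_reduce
  rw [mul_add, ← commutator_mul_left hH w u, ← commutator_mul_right hH a s,
    ← commutator_mul_left hH r v, ← hw, ← hs, ← hr]
  noncomm_ring

theorem exists_commutator_eq_mul (hker : ∀ x : U, π x = 0 ↔ ∃ y : U, x = H * y) {a : U}
    (ha : ∀ t : Ubar, π a * t = t * π a) (v : U) : ∃ w : U, a * v - v * a = H * w :=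
  (hker _).mp (by rw [map_sub, map_mul, map_mul, ha, sub_self])

theorem map_commute_of_commutator_eq_mul (hH : ∀ x : U, H * x = x * H)
    (hreg : IsLeftRegular H) (hπ : Function.Surjective π)
    (hker : ∀ x : U, π x = 0 ↔ ∃ y : U, x = H * y) {a v w : U}
    (ha : ∀ t : Ubar, π a * t = t * π a) (hv : ∀ t : Ubar, π v * t = t * π v)
    (hw : a * v - v * a = H * w) (t : Ubar) : π w * t = t * π w := by
  obtain ⟨u, rfl⟩ := hπ t
  obtain ⟨s, hs⟩ := exists_commutator_eq_mul hker hv u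
  obtain ⟨r, hr⟩ := exists_commutator_eq_mul hker ha u
  have hwu := congrArg π (commutator_eq_of_commutator_eq_mul hH hreg hw hs hr)
  simp only [map_sub, map_add, map_mul, ha (π s), hv (π r), sub_self, add_zero] at hwu
  exact sub_eq_zero.mp hwu

end Commutators

section ReducedAd

variable {U Ubar F : Type*} [Ring U] [FunLike F U Ubar] {π : F} {H : U}

/-- `D` is the paper's `D_a`. -/
def IsReducedAd (π : F) (H a : U) (D : Ubar → Ubar) : Prop :=
  ∀ v w : U, a * v - v * a = H * w → D (π v) = π w

theorem IsReducedAd.add_algebraMap {R : Type*} [CommSemiring R] [Algebra R U] {a : U}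
    {D : Ubar → Ubar} (hD : IsReducedAd π H a D) (c : R) :
    IsReducedAd π H (a + algebraMap R U c) D := by
  intro v w hw
  apply hD
  rw [← hw, add_mul, mul_add, Algebra.commutes c v]
  abel

/-- `B` is the paper's Poisson bracket `{ū, v̄}` on the center. -/
def IsReducedBracket [Mul Ubar] (π : F) (H : U) (B : Ubar → Ubar → Ubar) : Prop :=
  ∀ u v w : U, (∀ t : Ubar, π u * t = t * π u) → (∀ t : Ubar, π v * t = t * π v) →
    u * v - v * u = H * w → B (π u) (π v) = π w

variable [Ring Ubar] [RingHomClass F U Ubar]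

theorem isReducedAd_mul_left (hH : ∀ x : U, H * x = x * H) (hreg : IsLeftRegular H) (a : U) :
    IsReducedAd π H (H * a) (fun y => π a * y - y * π a) := by
  intro v w hw
  rw [hreg (hw.symm.trans (commutator_mul_left hH a v))]
  simp only [map_sub, map_mul]

theorem IsReducedAd.apply_eq_of_isReducedAd (hπ : Function.Surjective π)
    (hker : ∀ x : U, π x = 0 ↔ ∃ y : U, x = H * y) {a : U} (ha : ∀ t : Ubar, π a * t = t * π a)
    {D D' : Ubar → Ubar} (hD : IsReducedAd π H a D) (hD' : IsReducedAd π H a D') (y : Ubar) :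
    D y = D' y := by
  obtain ⟨v, rfl⟩ := hπ y
  obtain ⟨w, hw⟩ := exists_commutator_eq_mul hker ha v
  rw [hD v w hw, hD' v w hw]

theorem IsReducedAd.map_commute (hH : ∀ x : U, H * x = x * H) (hreg : IsLeftRegular H)
    (hπ : Function.Surjective π) (hker : ∀ x : U, π x = 0 ↔ ∃ y : U, x = H * y) {a : U}
    {D : Ubar → Ubar} (hD : IsReducedAd π H a D) (ha : ∀ t : Ubar, π a * t = t * π a)
    {x : Ubar} (hx : ∀ t : Ubar, x * t = t * x) (t : Ubar) : D x * t = t * D x := by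
  obtain ⟨v, rfl⟩ := hπ x
  obtain ⟨w, hw⟩ := exists_commutator_eq_mul hker ha v
  rw [hD v w hw]
  exact map_commute_of_commutator_eq_mul hH hreg hπ hker ha hx hw t

theorem IsReducedAd.apply_eq_bracket (hπ : Function.Surjective π)
    (hker : ∀ x : U, π x = 0 ↔ ∃ y : U, x = H * y) {B : Ubar → Ubar → Ubar}
    (hB : IsReducedBracket π H B) {a : U} {D : Ubar → Ubar} (hD : IsReducedAd π H a D)
    (ha : ∀ t : Ubar, π a * t = t * π a) {x : Ubar} (hx : ∀ t : Ubar, x * t = t * x) :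
    D x = B (π a) x := by
  obtain ⟨v, rfl⟩ := hπ x
  obtain ⟨w, hw⟩ := exists_commutator_eq_mul hker ha v
  rw [hD v w hw, hB a v w ha hx hw]

theorem IsReducedAd.comp_sub_comp_eq_bracket (hH : ∀ x : U, H * x = x * H)
    (hreg : IsLeftRegular H) (hπ : Function.Surjective π)
    (hker : ∀ x : U, π x = 0 ↔ ∃ y : U, x = H * y) {B : Ubar → Ubar → Ubar}
    (hB : IsReducedBracket π H B) {a b : U} {Da Db : Ubar → Ubar} (hDa : IsReducedAd π H a Da)
    (hDb : IsReducedAd π H b Db) (ha : ∀ t : Ubar, π a * t = t * π a)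
    (hb : ∀ t : Ubar, π b * t = t * π b) {x : Ubar} (hx : ∀ t : Ubar, x * t = t * x) :
    Da (Db x) - Db (Da x) = B (π a) (B (π b) x) - B (π b) (B (π a) x) := by
  rw [hDa.apply_eq_bracket hπ hker hB ha (hDb.map_commute hH hreg hπ hker hb hx),
    hDb.apply_eq_bracket hπ hker hB hb (hDa.map_commute hH hreg hπ hker ha hx),
    hDa.apply_eq_bracket hπ hker hB ha hx, hDb.apply_eq_bracket hπ hker hB hb hx]

theorem exists_bracket_sub_bracket_eq (hH : ∀ x : U, H * x = x * H) (hreg : IsLeftRegular H)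
    (hπ : Function.Surjective π) (hker : ∀ x : U, π x = 0 ↔ ∃ y : U, x = H * y)
    {B : Ubar → Ubar → Ubar} (hB : IsReducedBracket π H B) {z z' : Ubar}
    (hz : ∀ t : Ubar, z * t = t * z) (hz' : ∀ t : Ubar, z' * t = t * z') :
    ∃ z'' : Ubar, (∀ t : Ubar, z'' * t = t * z'') ∧
      ∀ x : Ubar, (∀ t : Ubar, x * t = t * x) → B z (B z' x) - B z' (B z x) = B z'' x := by
  obtain ⟨a, rfl⟩ := hπ z
  obtain ⟨b, rfl⟩ := hπ z'
  obtain ⟨c, hc⟩ := exists_commutator_eq_mul hker hz b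
  have hc_central := map_commute_of_commutator_eq_mul hH hreg hπ hker hz hz' hc
  refine ⟨π c, hc_central, fun x hx => ?_⟩
  obtain ⟨v, rfl⟩ := hπ x
  obtain ⟨s, hs⟩ := exists_commutator_eq_mul hker hz' v
  obtain ⟨r, hr⟩ := exists_commutator_eq_mul hker hz v
  obtain ⟨t, ht⟩ := exists_commutator_eq_mul hker hz s
  obtain ⟨q, hq⟩ := exists_commutator_eq_mul hker hz' r
  have hcv : c * v - v * c = H * (t - q) := by
    rw [commutator_eq_of_commutator_eq_mul hH hreg hc hs hr, ht, ← neg_sub, hq, mul_sub,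
      sub_eq_add_neg]
  rw [hB b v s hz' hx hs, hB a v r hz hx hr,
    hB a s t hz (map_commute_of_commutator_eq_mul hH hreg hπ hker hz' hx hs) ht,
    hB b r q hz' (map_commute_of_commutator_eq_mul hH hreg hπ hker hz hx hr) hq,
    hB c v (t - q) hc_central hx hcv, map_sub]

end ReducedAd

section Linear

variable {R U Ubar : Type*} [CommRing R] [Ring U] [Ring Ubar] [Algebra R U] [Algebra R Ubar]
  {π : U →ₐ[R] Ubar} {H : U}

/-- Divide `ad a` by `H` on `U`, then pass to the quotient: the result preserves `H U = ker π`
because `[a, H y] = H [a, y]` and `π a` is central. -/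
theorem exists_linearMap_isReducedAd (hH : ∀ x : U, H * x = x * H) (hreg : IsLeftRegular H)
    (hπ : Function.Surjective π) (hker : ∀ x : U, π x = 0 ↔ ∃ y : U, x = H * y) {a : U}
    (ha : ∀ t : Ubar, π a * t = t * π a) : ∃ D : Ubar →ₗ[R] Ubar, IsReducedAd π H a D := by
  let mulH : U →ₗ[R] U := LinearMap.mulLeft R H
  let ad : U →ₗ[R] U := LinearMap.mulLeft R a - LinearMap.mulRight R a
  have hdvd : ∀ v, ad v ∈ LinearMap.range mulH := fun v =>
    let ⟨w, hw⟩ := exists_commutator_eq_mul hker ha v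
    ⟨w, hw.symm⟩
  let f : U →ₗ[R] U :=
    (LinearEquiv.ofInjective mulH hreg).symm.toLinearMap ∘ₗ ad.codRestrict _ hdvd
  have hf : ∀ v, a * v - v * a = H * f v := fun v =>
    (congrArg Subtype.val ((LinearEquiv.ofInjective mulH hreg).apply_symm_apply
      (ad.codRestrict _ hdvd v))).symm
  have hker_le : LinearMap.ker π.toLinearMap ≤ LinearMap.ker (π.toLinearMap ∘ₗ f) := by
    intro x hx
    obtain ⟨y, rfl⟩ := (hker x).mp hx
    have hfHy : f (H * y) = a * y - y * a :=
      hreg ((hf _).symm.trans (commutator_mul_right hH a y))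
    simp only [LinearMap.mem_ker, LinearMap.comp_apply, AlgHom.toLinearMap_apply, hfHy, map_sub,
      map_mul, ha, sub_self]
  refine ⟨(LinearMap.ker π.toLinearMap).liftQ _ hker_le ∘ₗ
    (π.toLinearMap.quotKerEquivOfSurjective hπ).symm.toLinearMap, fun v w hw => ?_⟩
  rw [LinearMap.comp_apply, LinearEquiv.coe_coe, ← AlgHom.toLinearMap_apply,
    LinearMap.quotKerEquivOfSurjective_symm_apply π.toLinearMap hπ, Submodule.liftQ_apply,
    LinearMap.comp_apply, hreg ((hf v).symm.trans hw), AlgHom.toLinearMap_apply]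

theorem exists_isReducedAd_inner (hH : ∀ x : U, H * x = x * H) (hreg : IsLeftRegular H)
    (hπ : Function.Surjective π) (hker : ∀ x : U, π x = 0 ↔ ∃ y : U, x = H * y) (w0 : Ubar) :
    ∃ (a : U) (D : Ubar →ₗ[R] Ubar), (∀ t : Ubar, π a * t = t * π a) ∧ IsReducedAd π H a D ∧
      ∀ y : Ubar, D y = w0 * y - y * w0 := by
  obtain ⟨a, rfl⟩ := hπ w0
  have hHa : π (H * a) = 0 := (hker _).mpr ⟨a, rfl⟩
  refine ⟨H * a, LinearMap.mulLeft R (π a) - LinearMap.mulRight R (π a),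
    fun t => by rw [hHa, zero_mul, mul_zero], isReducedAd_mul_left hH hreg a, fun y => rfl⟩

theorem IsReducedAd.exists_eq_inner (hH : ∀ x : U, H * x = x * H) (hreg : IsLeftRegular H)
    (hπ : Function.Surjective π) (hker : ∀ x : U, π x = 0 ↔ ∃ y : U, x = H * y) {a : U} {c : R}
    (ha : π a = algebraMap R Ubar c) {D : Ubar → Ubar} (hD : IsReducedAd π H a D) :
    ∃ w0 : Ubar, ∀ y : Ubar, D y = w0 * y - y * w0 := by
  obtain ⟨a0, ha0⟩ := (hker (a - algebraMap R U c)).mp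
    (by rw [map_sub, ha, AlgHom.commutes, sub_self])
  obtain rfl : a = H * a0 + algebraMap R U c := by rw [← ha0, sub_add_cancel]
  exact ⟨π a0, hD.apply_eq_of_isReducedAd hπ hker (fun t => by rw [ha, Algebra.commutes])
    ((isReducedAd_mul_left hH hreg a0).add_algebraMap c)⟩

end Linear

theorem stmt6_general
    (A : Type*) [CommRing A] (h : A)
    (U : Type*) [Ring U] [Algebra ℂ U] [Algebra A U]
    (hreg : ∀ x : U, algebraMap A U h * x = 0 → x = 0)
    (Ubar : Type*) [Ring Ubar] [Algebra ℂ Ubar]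
    (π : U →ₐ[ℂ] Ubar) (hπ : Function.Surjective π)
    (hker : ∀ x : U, π x = 0 ↔ ∃ y : U, x = algebraMap A U h * y)
    (B : Ubar → Ubar → Ubar)
    (hB : ∀ u v w : U, (∀ t : Ubar, π u * t = t * π u) → (∀ t : Ubar, π v * t = t * π v) →
        u * v - v * u = algebraMap A U h * w → B (π u) (π v) = π w) :
    -- (a) every element of L maps the center Z into Z
    (∀ (a : U) (D : Ubar →ₗ[ℂ] Ubar), (∀ t : Ubar, π a * t = t * π a) →
        (∀ v w : U, a * v - v * a = algebraMap A U h * w → D (π v) = π w) →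
        ∀ x : Ubar, (∀ t : Ubar, x * t = t * x) → ∀ t : Ubar, D x * t = t * D x) ∧
    -- (b) L' is closed under the commutator of derivations of Z
    (∀ z z' : Ubar, (∀ t : Ubar, z * t = t * z) → (∀ t : Ubar, z' * t = t * z') →
        ∃ z'' : Ubar, (∀ t : Ubar, z'' * t = t * z'') ∧
          ∀ x : Ubar, (∀ t : Ubar, x * t = t * x) →
            B z (B z' x) - B z' (B z x) = B z'' x) ∧
    -- (c) ρ is well defined: D_a restricted to Z is the Hamiltonian derivation {ā, −}
    (∀ (a : U) (D : Ubar →ₗ[ℂ] Ubar), (∀ t : Ubar, π a * t = t * π a) →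
        (∀ v w : U, a * v - v * a = algebraMap A U h * w → D (π v) = π w) →
        ∀ x : Ubar, (∀ t : Ubar, x * t = t * x) → D x = B (π a) x) ∧
    -- (c') ρ is surjective
    (∀ zc : Ubar, (∀ t : Ubar, zc * t = t * zc) →
        ∃ (a : U) (D : Ubar →ₗ[ℂ] Ubar), π a = zc ∧
          ∀ v w : U, a * v - v * a = algebraMap A U h * w → D (π v) = π w) ∧
    -- (d) ρ is a Lie algebra homomorphism
    (∀ (a b : U) (Da Db : Ubar →ₗ[ℂ] Ubar),
        (∀ t : Ubar, π a * t = t * π a) → (∀ t : Ubar, π b * t = t * π b) →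
        (∀ v w : U, a * v - v * a = algebraMap A U h * w → Da (π v) = π w) →
        (∀ v w : U, b * v - v * b = algebraMap A U h * w → Db (π v) = π w) →
        ∀ x : Ubar, (∀ t : Ubar, x * t = t * x) →
          Da (Db x) - Db (Da x) = B (π a) (B (π b) x) - B (π b) (B (π a) x)) ∧
    -- (e) every inner derivation of Ū lies in L and restricts to 0 on Z
    (∀ w0 : Ubar,
        (∃ (a : U) (D : Ubar →ₗ[ℂ] Ubar), (∀ t : Ubar, π a * t = t * π a) ∧
            (∀ v w : U, a * v - v * a = algebraMap A U h * w → D (π v) = π w) ∧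
            ∀ y : Ubar, D y = w0 * y - y * w0) ∧
        (∀ x : Ubar, (∀ t : Ubar, x * t = t * x) → w0 * x - x * w0 = 0)) ∧
    -- (f) if every Casimir of Z is a scalar, then ker ρ consists of inner derivations
    ((∀ zc : Ubar, (∀ t : Ubar, zc * t = t * zc) →
        (∀ y : Ubar, (∀ t : Ubar, y * t = t * y) → B zc y = 0) →
        ∃ a : ℂ, zc = algebraMap ℂ Ubar a) →
      ∀ (a : U) (D : Ubar →ₗ[ℂ] Ubar), (∀ t : Ubar, π a * t = t * π a) →
        (∀ v w : U, a * v - v * a = algebraMap A U h * w → D (π v) = π w) →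
        (∀ x : Ubar, (∀ t : Ubar, x * t = t * x) → D x = 0) →
        ∃ w0 : Ubar, ∀ y : Ubar, D y = w0 * y - y * w0) := by
  have hH : ∀ x : U, algebraMap A U h * x = x * algebraMap A U h := Algebra.commutes h
  replace hreg : IsLeftRegular (algebraMap A U h) :=
    isLeftRegular_iff_mem_nonZeroDivisorsLeft.mpr hreg
  refine ⟨fun a D ha hD x hx => IsReducedAd.map_commute hH hreg hπ hker hD ha hx,
    fun z z' hz hz' => exists_bracket_sub_bracket_eq hH hreg hπ hker hB hz hz',
    fun a D ha hD x hx => IsReducedAd.apply_eq_bracket hπ hker hB hD ha hx,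
    fun z hz => ?_,
    fun a b Da Db ha hb hDa hDb x hx =>
      IsReducedAd.comp_sub_comp_eq_bracket hH hreg hπ hker hB hDa hDb ha hb hx,
    fun w0 => ⟨exists_isReducedAd_inner hH hreg hπ hker w0,
      fun x hx => sub_eq_zero.mpr (hx w0).symm⟩,
    fun hcas a D ha hD hDz => ?_⟩
  · obtain ⟨a, rfl⟩ := hπ z
    obtain ⟨D, hD⟩ := exists_linearMap_isReducedAd hH hreg hπ hker hz
    exact ⟨a, D, rfl, hD⟩
  · obtain ⟨c, hc⟩ := hcas (π a) ha fun y hy =>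
      (IsReducedAd.apply_eq_bracket hπ hker hB hD ha hy).symm.trans (hDz y hy)
    exact IsReducedAd.exists_eq_inner hH hreg hπ hker hc hD

/-- elements of `L` preserve the center `Z`; the Hamiltonian derivations
`L' = {z,−}|_Z` form a Lie algebra; the restriction map `ρ : L → L'` is a well-defined
surjective Lie algebra homomorphism whose kernel contains the inner derivations, and if
all Casimirs are scalars then the kernel consists exactly of inner derivations. -/
theorem stmt6
    (A : Type*) [CommRing A] [Algebra ℂ A] (h : A)
    (hA : Function.Bijective (algebraMap ℂ (A ⧸ Ideal.span {h})))
    (U : Type*) [Ring U] [Algebra ℂ U] [Algebra A U] [IsScalarTower ℂ A U]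
    (hreg : ∀ x : U, algebraMap A U h * x = 0 → x = 0)
    (Ubar : Type*) [Ring Ubar] [Algebra ℂ Ubar]
    (π : U →ₐ[ℂ] Ubar) (hπ : Function.Surjective π)
    (hker : ∀ x : U, π x = 0 ↔ ∃ y : U, x = algebraMap A U h * y)
    (B : Ubar → Ubar → Ubar)
    (hB : ∀ u v w : U, (∀ t : Ubar, π u * t = t * π u) → (∀ t : Ubar, π v * t = t * π v) →
        u * v - v * u = algebraMap A U h * w → B (π u) (π v) = π w) :
    -- (a) every element of L maps the center Z into Z
    (∀ (a : U) (D : Ubar →ₗ[ℂ] Ubar), (∀ t : Ubar, π a * t = t * π a) →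
        (∀ v w : U, a * v - v * a = algebraMap A U h * w → D (π v) = π w) →
        ∀ x : Ubar, (∀ t : Ubar, x * t = t * x) → ∀ t : Ubar, D x * t = t * D x) ∧
    -- (b) L' is closed under the commutator of derivations of Z
    (∀ z z' : Ubar, (∀ t : Ubar, z * t = t * z) → (∀ t : Ubar, z' * t = t * z') →
        ∃ z'' : Ubar, (∀ t : Ubar, z'' * t = t * z'') ∧
          ∀ x : Ubar, (∀ t : Ubar, x * t = t * x) →
            B z (B z' x) - B z' (B z x) = B z'' x) ∧
    -- (c) ρ is well defined: D_a restricted to Z is the Hamiltonian derivation {ā, −}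
    (∀ (a : U) (D : Ubar →ₗ[ℂ] Ubar), (∀ t : Ubar, π a * t = t * π a) →
        (∀ v w : U, a * v - v * a = algebraMap A U h * w → D (π v) = π w) →
        ∀ x : Ubar, (∀ t : Ubar, x * t = t * x) → D x = B (π a) x) ∧
    -- (c') ρ is surjective
    (∀ zc : Ubar, (∀ t : Ubar, zc * t = t * zc) →
        ∃ (a : U) (D : Ubar →ₗ[ℂ] Ubar), π a = zc ∧
          ∀ v w : U, a * v - v * a = algebraMap A U h * w → D (π v) = π w) ∧
    -- (d) ρ is a Lie algebra homomorphism
    (∀ (a b : U) (Da Db : Ubar →ₗ[ℂ] Ubar),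
        (∀ t : Ubar, π a * t = t * π a) → (∀ t : Ubar, π b * t = t * π b) →
        (∀ v w : U, a * v - v * a = algebraMap A U h * w → Da (π v) = π w) →
        (∀ v w : U, b * v - v * b = algebraMap A U h * w → Db (π v) = π w) →
        ∀ x : Ubar, (∀ t : Ubar, x * t = t * x) →
          Da (Db x) - Db (Da x) = B (π a) (B (π b) x) - B (π b) (B (π a) x)) ∧
    -- (e) every inner derivation of Ū lies in L and restricts to 0 on Z
    (∀ w0 : Ubar,
        (∃ (a : U) (D : Ubar →ₗ[ℂ] Ubar), (∀ t : Ubar, π a * t = t * π a) ∧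
            (∀ v w : U, a * v - v * a = algebraMap A U h * w → D (π v) = π w) ∧
            ∀ y : Ubar, D y = w0 * y - y * w0) ∧
        (∀ x : Ubar, (∀ t : Ubar, x * t = t * x) → w0 * x - x * w0 = 0)) ∧
    -- (f) if every Casimir of Z is a scalar, then ker ρ consists of inner derivations
    ((∀ zc : Ubar, (∀ t : Ubar, zc * t = t * zc) →
        (∀ y : Ubar, (∀ t : Ubar, y * t = t * y) → B zc y = 0) →
        ∃ a : ℂ, zc = algebraMap ℂ Ubar a) →
      ∀ (a : U) (D : Ubar →ₗ[ℂ] Ubar), (∀ t : Ubar, π a * t = t * π a) →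
        (∀ v w : U, a * v - v * a = algebraMap A U h * w → D (π v) = π w) →
        (∀ x : Ubar, (∀ t : Ubar, x * t = t * x) → D x = 0) →
        ∃ w0 : Ubar, ∀ y : Ubar, D y = w0 * y - y * w0) :=
  stmt6_general A h U hreg Ubar π hπ hker B hB
end

section
/- Let ς : U → U be an A-algebra endomorphism and ∂ : U → U an A-linear map satisfying the skew-Leibniz rule ∂(xy) = ∂(x)·ς(y) + x·∂(y) for all x, y ∈ U; let ς̄ and ∂̄ be the induced maps on Ū = U/hU. If x₁, x₂ ∈ Z(Ū) satisfy ς̄(xᵢ) = xᵢ and ∂̄(xᵢ) = 0 for i = 1, 2, then ∂̄({x₁, x₂}) = 0. -/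
/-!
Lift `x₁, x₂` to `u₁, u₂ ∈ U` and write `[u₁, u₂] = h w`, so that `{x₁, x₂} = w̄`, and
`∂ uᵢ = h vᵢ`. Applying the skew-Leibniz rule to `[u₁, u₂] = h w` and cancelling the regular
element `h` gives `∂ w = v₁ ς(u₂) + u₁ v₂ - v₂ ς(u₁) - u₂ v₁`. Modulo `h` this is
`v̄₁ x₂ + x₁ v̄₂ - v̄₂ x₁ - x₂ v̄₁`, which vanishes because `x₁, x₂` are central.
-/

section SkewDerivation

variable {A U : Type*} [CommRing A] [Ring U] [Algebra A U] {ς : U →ₐ[A] U} {der : U →ₗ[A] U}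

theorem skewDerivation_commutator (hleib : ∀ x y : U, der (x * y) = der x * ς y + x * der y)
    (u v : U) : der (u * v - v * u) = der u * ς v + u * der v - (der v * ς u + v * der u) := by
  rw [map_sub, hleib, hleib]

theorem skewDerivation_eq_of_commutator_eq_mul
    (hleib : ∀ x y : U, der (x * y) = der x * ς y + x * der y)
    {a : A} (ha : ∀ x : U, algebraMap A U a * x = 0 → x = 0) {u₁ u₂ v₁ v₂ w : U}
    (hw : u₁ * u₂ - u₂ * u₁ = algebraMap A U a * w)
    (h₁ : der u₁ = algebraMap A U a * v₁) (h₂ : der u₂ = algebraMap A U a * v₂) :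
    der w = v₁ * ς u₂ + u₁ * v₂ - (v₂ * ς u₁ + u₂ * v₁) := by
  have hdw : algebraMap A U a * der w =
      algebraMap A U a * (v₁ * ς u₂ + u₁ * v₂ - (v₂ * ς u₁ + u₂ * v₁)) := by
    calc algebraMap A U a * der w = der (algebraMap A U a * w) := by
          rw [← Algebra.smul_def, ← Algebra.smul_def, map_smul]
      _ = der (u₁ * u₂ - u₂ * u₁) := by rw [hw]
      _ = _ := by
          rw [skewDerivation_commutator hleib, h₁, h₂, Algebra.left_comm u₁, Algebra.left_comm u₂]
          simp only [mul_add, mul_sub, mul_assoc]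
  exact sub_eq_zero.mp (ha _ (by rw [mul_sub, hdw, sub_self]))

end SkewDerivation

theorem stmt10_general
    (A : Type*) [CommRing A] (h : A)
    (U : Type*) [Ring U] [Algebra ℂ U] [Algebra A U]
    (hreg : ∀ x : U, algebraMap A U h * x = 0 → x = 0)
    (Ubar : Type*) [Ring Ubar] [Algebra ℂ Ubar]
    (π : U →ₐ[ℂ] Ubar) (hπ : Function.Surjective π)
    (hker : ∀ x : U, π x = 0 ↔ ∃ y : U, x = algebraMap A U h * y)
    (B : Ubar → Ubar → Ubar)
    (hB : ∀ u v w : U, (∀ t : Ubar, π u * t = t * π u) → (∀ t : Ubar, π v * t = t * π v) →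
        u * v - v * u = algebraMap A U h * w → B (π u) (π v) = π w)
    (ς : U →ₐ[A] U) (ςbar : Ubar →ₐ[ℂ] Ubar)
    (hς : ∀ x : U, ςbar (π x) = π (ς x))
    (der : U →ₗ[A] U)
    (hleib : ∀ x y : U, der (x * y) = der x * ς y + x * der y)
    (derbar : Ubar →ₗ[ℂ] Ubar)
    (hder : ∀ x : U, derbar (π x) = π (der x))
    (x₁ x₂ : Ubar)
    (hx₁ : ∀ t : Ubar, x₁ * t = t * x₁) (hx₂ : ∀ t : Ubar, x₂ * t = t * x₂)
    (hfix₁ : ςbar x₁ = x₁) (hfix₂ : ςbar x₂ = x₂)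
    (hkill₁ : derbar x₁ = 0) (hkill₂ : derbar x₂ = 0) :
    derbar (B x₁ x₂) = 0 := by
  obtain ⟨u₁, rfl⟩ := hπ x₁
  obtain ⟨u₂, rfl⟩ := hπ x₂
  obtain ⟨w, hw⟩ := (hker (u₁ * u₂ - u₂ * u₁)).mp
    (by rw [map_sub, map_mul, map_mul, hx₁, sub_self])
  obtain ⟨v₁, hv₁⟩ := (hker (der u₁)).mp (by rw [← hder, hkill₁])
  obtain ⟨v₂, hv₂⟩ := (hker (der u₂)).mp (by rw [← hder, hkill₂])
  have hςu₁ : π (ς u₁) = π u₁ := by rw [← hς, hfix₁]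
  have hςu₂ : π (ς u₂) = π u₂ := by rw [← hς, hfix₂]
  rw [hB u₁ u₂ w hx₁ hx₂ hw, hder, skewDerivation_eq_of_commutator_eq_mul hleib hreg hw hv₁ hv₂]
  simp only [map_sub, map_add, map_mul, hςu₁, hςu₂]
  rw [hx₁ (π v₂), ← hx₂ (π v₁)]
  abel

/-- if an induced `(id, ς̄)`-derivation `∂̄` of `Ū` kills two central
elements `x₁, x₂` fixed by `ς̄`, then it kills their Poisson bracket `{x₁, x₂}`. -/
theorem stmt10
    (A : Type*) [CommRing A] [Algebra ℂ A] (h : A)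
    (hA : Function.Bijective (algebraMap ℂ (A ⧸ Ideal.span {h})))
    (U : Type*) [Ring U] [Algebra ℂ U] [Algebra A U] [IsScalarTower ℂ A U]
    (hreg : ∀ x : U, algebraMap A U h * x = 0 → x = 0)
    (Ubar : Type*) [Ring Ubar] [Algebra ℂ Ubar]
    (π : U →ₐ[ℂ] Ubar) (hπ : Function.Surjective π)
    (hker : ∀ x : U, π x = 0 ↔ ∃ y : U, x = algebraMap A U h * y)
    (B : Ubar → Ubar → Ubar)
    (hB : ∀ u v w : U, (∀ t : Ubar, π u * t = t * π u) → (∀ t : Ubar, π v * t = t * π v) →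
        u * v - v * u = algebraMap A U h * w → B (π u) (π v) = π w)
    (ς : U →ₐ[A] U) (ςbar : Ubar →ₐ[ℂ] Ubar)
    (hς : ∀ x : U, ςbar (π x) = π (ς x))
    (der : U →ₗ[A] U)
    (hleib : ∀ x y : U, der (x * y) = der x * ς y + x * der y)
    (derbar : Ubar →ₗ[ℂ] Ubar)
    (hder : ∀ x : U, derbar (π x) = π (der x))
    (hleibbar : ∀ x y : Ubar, derbar (x * y) = derbar x * ςbar y + x * derbar y)
    (x₁ x₂ : Ubar)
    (hx₁ : ∀ t : Ubar, x₁ * t = t * x₁) (hx₂ : ∀ t : Ubar, x₂ * t = t * x₂)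
    (hfix₁ : ςbar x₁ = x₁) (hfix₂ : ςbar x₂ = x₂)
    (hkill₁ : derbar x₁ = 0) (hkill₂ : derbar x₂ = 0) :
    derbar (B x₁ x₂) = 0 :=
  stmt10_general A h U hreg Ubar π hπ hker B hB ς ςbar hς der hleib derbar hder x₁ x₂ hx₁ hx₂ hfix₁
    hfix₂ hkill₁ hkill₂
end

section
/- Let (ς_i)_{i∈I} be a family of A-algebra endomorphisms of U and (∂_i)_{i∈I} a family of A-linear (id, ς_i)-derivations of U (∂_i(xy) = ∂_i(x)ς_i(y) + x∂_i(y)), with induced maps ς̄_i, ∂̄_i on Ū = U/hU. Then the subalgebra Z' := Z(Ū) ∩ (⋂_{i∈I} ker ∂̄_i) ∩ (⋂_{i∈I} ker(ς̄_i − id)) is closed under the Poisson bracket: {x, y} ∈ Z' for all x, y ∈ Z'. Hence the Poisson order structure on (Ū, Z(Ū)) restricts to a Poisson order structure on (Ū, Z'). -/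
/-!
Lift `x, y` to `u, v ∈ U`; since `x` is central, `[u, v] = h w` and `{x, y} = π w`. The three
conditions defining `Z'` say that `[u, s]`, `∂ᵢ u` and `ςᵢ u - u` are divisible by `h`, and
likewise for `v`. Applying the Jacobi identity, the twisted Leibniz rule and multiplicativity of
`ςᵢ` to `[u, v] = h w`, and cancelling the regular element `h`, expresses `[w, s]`, `∂ᵢ w` and
`ςᵢ w - w` through these quotients; modulo `h` the resulting expressions are commutators with the
central elements `x, y`, hence vanish.
-/

namespace IsSMulRegular

variable {A U : Type*} [CommRing A] [Ring U] [Algebra A U] {h : A}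
  (hreg : IsSMulRegular U h) {u v w : U} (hw : u * v - v * u = h • w)
include hreg hw

theorem commutator_eq_of_commutator_eq_smul {s a b : U}
    (ha : u * s - s * u = h • a) (hb : v * s - s * v = h • b) :
    w * s - s * w = (a * v - v * a) + (u * b - b * u) := by
  apply hreg
  calc h • (w * s - s * w) = (h • w) * s - s * (h • w) := by
        rw [smul_sub, smul_mul_assoc, mul_smul_comm]
    _ = (u * s - s * u) * v - v * (u * s - s * u)
          + (u * (v * s - s * v) - (v * s - s * v) * u) := by
        rw [← hw]; noncomm_ring
    _ = h • ((a * v - v * a) + (u * b - b * u)) := by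
        rw [ha, hb]; simp only [smul_mul_assoc, mul_smul_comm, smul_sub, smul_add]

theorem derivation_eq_of_commutator_eq_smul (D : U →ₗ[A] U) (σ : U → U)
    (hleib : ∀ x y, D (x * y) = D x * σ y + x * D y) {a b : U}
    (ha : D u = h • a) (hb : D v = h • b) :
    D w = a * σ v + u * b - (b * σ u + v * a) := by
  apply hreg
  calc h • D w = D u * σ v + u * D v - (D v * σ u + v * D u) := by
        rw [← map_smul, ← hw, map_sub, hleib, hleib]
    _ = h • (a * σ v + u * b - (b * σ u + v * a)) := by
        rw [ha, hb]; simp only [smul_mul_assoc, mul_smul_comm, smul_sub, smul_add]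

theorem algHom_eq_of_commutator_eq_smul (σ : U →ₐ[A] U) {c d : U}
    (hc : σ u = u + h • c) (hd : σ v = v + h • d) :
    σ w = w + ((u * d - d * u) + (c * v - v * c) + h • (c * d - d * c)) := by
  apply hreg
  calc h • σ w = σ u * σ v - σ v * σ u := by
        rw [← map_smul, ← hw, map_sub, map_mul, map_mul]
    _ = h • w + h • ((u * d - d * u) + (c * v - v * c) + h • (c * d - d * c)) := by
        rw [hc, hd, ← hw]
        simp only [add_mul, mul_add, smul_mul_assoc, mul_smul_comm]
        module
    _ = h • (w + ((u * d - d * u) + (c * v - v * c) + h • (c * d - d * c))) :=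
        (smul_add h w _).symm

end IsSMulRegular

section Reduction

variable {A U Ubar F : Type*} [CommRing A] [Ring U] [Algebra A U] [Ring Ubar]
  [FunLike F U Ubar] [RingHomClass F U Ubar] {h : A} {π : F}
  (hker : ∀ x : U, π x = 0 ↔ ∃ y, x = h • y)
include hker

theorem exists_eq_add_smul_of_map_eq {x y : U} (hxy : π x = π y) : ∃ a, x = y + h • a := by
  obtain ⟨a, ha⟩ := (hker (x - y)).mp (by rw [map_sub, hxy, sub_self])
  exact ⟨a, eq_add_of_sub_eq' ha⟩

theorem exists_commutator_eq_smul_of_commute {u : U} (hu : ∀ t, Commute (π u) t) (s : U) :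
    ∃ a, u * s - s * u = h • a :=
  (hker _).mp (by rw [map_sub, map_mul, map_mul, (hu _).eq, sub_self])

variable (hreg : IsSMulRegular U h) {u v w : U} (hw : u * v - v * u = h • w)
  (hu : ∀ t, Commute (π u) t) (hv : ∀ t, Commute (π v) t)
include hreg hw hu hv

theorem commute_map_of_commutator_eq_smul (hπ : Function.Surjective π) (t : Ubar) :
    Commute (π w) t := by
  obtain ⟨s, rfl⟩ := hπ t
  obtain ⟨a, ha⟩ := exists_commutator_eq_smul_of_commute hker hu s
  obtain ⟨b, hb⟩ := exists_commutator_eq_smul_of_commute hker hv s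
  have hws := congrArg π (hreg.commutator_eq_of_commutator_eq_smul hw ha hb)
  simp only [map_sub, map_add, map_mul, (hv _).eq, (hu _).eq, sub_self, add_zero] at hws
  exact sub_eq_zero.mp hws

theorem map_derivation_eq_zero_of_commutator_eq_smul (D : U →ₗ[A] U) (σ : U → U)
    (hleib : ∀ x y, D (x * y) = D x * σ y + x * D y) (hDu : π (D u) = 0) (hDv : π (D v) = 0)
    (hσu : π (σ u) = π u) (hσv : π (σ v) = π v) : π (D w) = 0 := by
  obtain ⟨a, ha⟩ := (hker _).mp hDu
  obtain ⟨b, hb⟩ := (hker _).mp hDv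
  rw [hreg.derivation_eq_of_commutator_eq_smul hw D σ hleib ha hb]
  simp only [map_sub, map_add, map_mul, hσu, hσv, (hv _).eq, (hu _).eq]
  abel

theorem map_algHom_eq_of_commutator_eq_smul (σ : U →ₐ[A] U)
    (hσu : π (σ u) = π u) (hσv : π (σ v) = π v) : π (σ w) = π w := by
  obtain ⟨c, hc⟩ := exists_eq_add_smul_of_map_eq hker hσu
  obtain ⟨d, hd⟩ := exists_eq_add_smul_of_map_eq hker hσv
  rw [hreg.algHom_eq_of_commutator_eq_smul hw σ hc hd]
  have hπsmul : ∀ x : U, π (h • x) = 0 := fun x => (hker _).mpr ⟨x, rfl⟩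
  simp only [map_add, map_sub, map_mul, hπsmul, (hv _).eq, (hu _).eq, sub_self, add_zero]

end Reduction

theorem stmt11_general
    (A : Type*) [CommRing A] (h : A)
    (U : Type*) [Ring U] [Algebra ℂ U] [Algebra A U]
    (hreg : ∀ x : U, algebraMap A U h * x = 0 → x = 0)
    (Ubar : Type*) [Ring Ubar] [Algebra ℂ Ubar]
    (π : U →ₐ[ℂ] Ubar) (hπ : Function.Surjective π)
    (hker : ∀ x : U, π x = 0 ↔ ∃ y : U, x = algebraMap A U h * y)
    (B : Ubar → Ubar → Ubar)
    (hB : ∀ u v w : U, (∀ t : Ubar, π u * t = t * π u) → (∀ t : Ubar, π v * t = t * π v) →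
        u * v - v * u = algebraMap A U h * w → B (π u) (π v) = π w)
    (ι : Type*)
    (ς : ι → (U →ₐ[A] U)) (ςbar : ι → (Ubar →ₐ[ℂ] Ubar))
    (hς : ∀ (i : ι) (x : U), ςbar i (π x) = π (ς i x))
    (der : ι → (U →ₗ[A] U))
    (hleib : ∀ (i : ι) (x y : U), der i (x * y) = der i x * ς i y + x * der i y)
    (derbar : ι → (Ubar →ₗ[ℂ] Ubar))
    (hder : ∀ (i : ι) (x : U), derbar i (π x) = π (der i x))
    (x y : Ubar)
    (hx : (∀ t : Ubar, x * t = t * x) ∧ ∀ i : ι, derbar i x = 0 ∧ ςbar i x = x)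
    (hy : (∀ t : Ubar, y * t = t * y) ∧ ∀ i : ι, derbar i y = 0 ∧ ςbar i y = y) :
    (∀ t : Ubar, B x y * t = t * B x y) ∧
    ∀ i : ι, derbar i (B x y) = 0 ∧ ςbar i (B x y) = B x y := by
  have hreg : IsSMulRegular U h := (isSMulRegular_algebraMap_iff U).mp
    (isLeftRegular_iff_right_eq_zero_of_mul.mpr hreg).isSMulRegular
  simp only [← Algebra.smul_def] at hker hB
  obtain ⟨u, rfl⟩ := hπ x
  obtain ⟨v, rfl⟩ := hπ y
  obtain ⟨w, hw⟩ := exists_commutator_eq_smul_of_commute hker hx.1 v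
  have hσ (i : ι) {z : U} (hz : ςbar i (π z) = π z) : π (ς i z) = π z := by rw [← hς, hz]
  rw [hB u v w hx.1 hy.1 hw]
  refine ⟨commute_map_of_commutator_eq_smul hker hreg hw hx.1 hy.1 hπ, fun i => ⟨?_, ?_⟩⟩
  · rw [hder]
    exact map_derivation_eq_zero_of_commutator_eq_smul hker hreg hw hx.1 hy.1 (der i) (ς i)
      (hleib i) (by rw [← hder, (hx.2 i).1]) (by rw [← hder, (hy.2 i).1])
      (hσ i (hx.2 i).2) (hσ i (hy.2 i).2)
  · rw [hς]
    exact map_algHom_eq_of_commutator_eq_smul hker hreg hw hx.1 hy.1 (ς i)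
      (hσ i (hx.2 i).2) (hσ i (hy.2 i).2)

/-- Theorem on restriction of Poisson orders: the subalgebra
`Z' = Z(Ū) ∩ (⋂ᵢ ker ∂̄ᵢ) ∩ (⋂ᵢ ker(ς̄ᵢ − id))` is closed under the Poisson bracket. -/
theorem stmt11
    (A : Type*) [CommRing A] [Algebra ℂ A] (h : A)
    (hA : Function.Bijective (algebraMap ℂ (A ⧸ Ideal.span {h})))
    (U : Type*) [Ring U] [Algebra ℂ U] [Algebra A U] [IsScalarTower ℂ A U]
    (hreg : ∀ x : U, algebraMap A U h * x = 0 → x = 0)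
    (Ubar : Type*) [Ring Ubar] [Algebra ℂ Ubar]
    (π : U →ₐ[ℂ] Ubar) (hπ : Function.Surjective π)
    (hker : ∀ x : U, π x = 0 ↔ ∃ y : U, x = algebraMap A U h * y)
    (B : Ubar → Ubar → Ubar)
    (hB : ∀ u v w : U, (∀ t : Ubar, π u * t = t * π u) → (∀ t : Ubar, π v * t = t * π v) →
        u * v - v * u = algebraMap A U h * w → B (π u) (π v) = π w)
    (ι : Type*)
    (ς : ι → (U →ₐ[A] U)) (ςbar : ι → (Ubar →ₐ[ℂ] Ubar))
    (hς : ∀ (i : ι) (x : U), ςbar i (π x) = π (ς i x))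
    (der : ι → (U →ₗ[A] U))
    (hleib : ∀ (i : ι) (x y : U), der i (x * y) = der i x * ς i y + x * der i y)
    (derbar : ι → (Ubar →ₗ[ℂ] Ubar))
    (hder : ∀ (i : ι) (x : U), derbar i (π x) = π (der i x))
    (hleibbar : ∀ (i : ι) (x y : Ubar),
        derbar i (x * y) = derbar i x * ςbar i y + x * derbar i y)
    (x y : Ubar)
    (hx : (∀ t : Ubar, x * t = t * x) ∧ ∀ i : ι, derbar i x = 0 ∧ ςbar i x = x)
    (hy : (∀ t : Ubar, y * t = t * y) ∧ ∀ i : ι, derbar i y = 0 ∧ ςbar i y = y) :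
    (∀ t : Ubar, B x y * t = t * B x y) ∧
    ∀ i : ι, derbar i (B x y) = 0 ∧ ςbar i (B x y) = B x y :=
  stmt11_general A h U hreg Ubar π hπ hker B hB ι ς ςbar hς der hleib derbar hder x y hx hy
end

section
/- For all i ≠ j in I, the element λ_ij := (𝐪_ii^{−c_ij}·𝐪_ij·𝐪_ji)^{c_ij} · (−c_ij)_{𝐪_ii}! · Π_{0 ≤ s < −c_ij} (𝐪_ii^s·𝐪_ij·𝐪_ji − 1) of ℂ[ν^{±1}] is nonzero, and its image in the localization 𝒜 is a unit of 𝒜 (equivalently, λ_ij⁻¹ ∈ 𝒜 inside ℂ(ν)). -/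
/-- The quantum integer `(n)_f = 1 + f + ⋯ + f^{n-1}`. -/
def qInt {R : Type*} [CommRing R] (f : R) (n : ℕ) : R :=
  ∑ k ∈ Finset.range n, f ^ k

/-- The quantum factorial `(m)_f! = (1)_f (2)_f ⋯ (m)_f`. -/
def qFact {R : Type*} [CommRing R] (f : R) : ℕ → R
  | 0 => 1
  | n + 1 => qFact f n * qInt f (n + 1)

/-!
Write `q = 𝐪_ii`, `a = 𝐪_ij 𝐪_ji` and `n = -c_ij`. Minimality of `n` makes every factor of `λ_ij`
nonzero, and the factors `q^s a - 1` are inverted in `𝒜` by construction, so it remains to see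
that each `(m)_q`, `1 ≤ m ≤ n`, becomes a unit. Since `(m)_q (q - 1) = q^m - 1`, it suffices to
invert `q^m - 1`. If `(n+1)_q = 0`, then `q^m` is a nontrivial `(n+1)`-st root of unity and
`(q^m - 1) ∑_{k ≤ n} (k)_{q^m} = -(n+1)` is already invertible in `ℂ[ν^{±1}]`. If instead
`q^n a = 1`, then `q^m - 1 = -q^m (q^{n-m} a - 1)` is a unit times one of the inverted factors.
-/

section QuantumNumbers

variable {R : Type*} [CommRing R]

theorem qInt_mul_sub_one (f : R) (n : ℕ) : qInt f n * (f - 1) = f ^ n - 1 :=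
  geom_sum_mul f n

theorem qInt_one (n : ℕ) : qInt (1 : R) n = n := by
  simp [qInt]

theorem qFact_eq_prod (f : R) (n : ℕ) : qFact f n = ∏ k ∈ Finset.range n, qInt f (k + 1) := by
  induction n with
  | zero => rfl
  | succ n ih => rw [qFact, ih, Finset.prod_range_succ]

theorem isUnit_sub_one_of_qInt_eq_zero {x : R} {N : ℕ} (hN : IsUnit (N : R))
    (hx : qInt x N = 0) : IsUnit (x - 1) := by
  have key : (x - 1) * ∑ k ∈ Finset.range N, qInt x k = -N := by
    have hsum : ∑ k ∈ Finset.range N, x ^ k = 0 := hx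
    simp_rw [Finset.mul_sum, mul_comm (x - 1), qInt_mul_sub_one]
    simp [Finset.sum_sub_distrib, hsum]
  exact isUnit_of_mul_isUnit_left (key ▸ hN.neg)

theorem isUnit_qInt_of_qInt_eq_zero [IsDomain R] {q : R} {N m : ℕ} (hN : IsUnit (N : R))
    (hqN : qInt q N = 0) (hqm : qInt q m ≠ 0) : IsUnit (qInt q m) := by
  have hq1 : q ≠ 1 := by
    rintro rfl
    rw [qInt_one] at hqN
    exact hN.ne_zero hqN
  have hpowN : q ^ N = 1 := by
    rw [← sub_eq_zero, ← qInt_mul_sub_one, hqN, zero_mul]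
  have hpowm : q ^ m - 1 ≠ 0 := by
    rw [← qInt_mul_sub_one]
    exact mul_ne_zero hqm (sub_ne_zero.mpr hq1)
  have hroot : qInt (q ^ m) N = 0 := by
    refine (mul_eq_zero.mp ?_).resolve_right hpowm
    rw [qInt_mul_sub_one, ← pow_mul, mul_comm, pow_mul, hpowN, one_pow, sub_self]
  have hunit : IsUnit (qInt q m * (q - 1)) := by
    rw [qInt_mul_sub_one]
    exact isUnit_sub_one_of_qInt_eq_zero hN hroot
  exact isUnit_of_mul_isUnit_left hunit

theorem isUnit_map_qInt_of_pow_mul_eq_one {B : Type*} [CommRing B] (φ : R →+* B) {q a : R}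
    (hq : IsUnit q) {k m : ℕ} (h : q ^ (k + m) * a = 1) (hk : IsUnit (φ (q ^ k * a - 1))) :
    IsUnit (φ (qInt q m)) := by
  have hfactor : qInt q m * (q - 1) = -q ^ m * (q ^ k * a - 1) := by
    rw [qInt_mul_sub_one]
    linear_combination h
  have hunit : IsUnit (φ (qInt q m) * φ (q - 1)) := by
    rw [← map_mul, hfactor, map_mul, map_neg]
    exact ((hq.pow m).map φ).neg.mul hk
  exact isUnit_of_mul_isUnit_left hunit

theorem isUnit_map_qFact [IsDomain R] {B : Type*} [CommRing B] (φ : R →+* B) {q a : R}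
    (hq : IsUnit q) {n : ℕ} (hN : IsUnit ((n + 1 : ℕ) : R))
    (hspec : qInt q (n + 1) * (1 - q ^ n * a) = 0) (hmin : ∀ s < n, qInt q (s + 1) ≠ 0)
    (hfactors : ∀ s < n, IsUnit (φ (q ^ s * a - 1))) :
    IsUnit (φ (qFact q n)) := by
  rw [qFact_eq_prod, map_prod, IsUnit.prod_iff]
  intro s hs
  have hs : s < n := Finset.mem_range.mp hs
  rcases mul_eq_zero.mp hspec with hroot | hpow
  · exact (isUnit_qInt_of_qInt_eq_zero hN hroot (hmin s hs)).map φ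
  · refine isUnit_map_qInt_of_pow_mul_eq_one φ hq (k := n - (s + 1)) ?_ (hfactors _ (by omega))
    rw [Nat.sub_add_cancel hs, ← sub_eq_zero, ← neg_sub, hpow, neg_zero]

theorem qFact_ne_zero [IsDomain R] {q : R} {n : ℕ} (h : ∀ s < n, qInt q (s + 1) ≠ 0) :
    qFact q n ≠ 0 := by
  rw [qFact_eq_prod, Finset.prod_ne_zero_iff]
  exact fun s hs ↦ h s (Finset.mem_range.mp hs)

end QuantumNumbers

open scoped Classical in
theorem stmt13_general (θ : ℕ)
    (qm : Fin θ → Fin θ → (LaurentPolynomial ℂ)ˣ)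
    (hfin : ∀ i j : Fin θ, i ≠ j → ∃ n : ℕ,
      qInt ((qm i i : LaurentPolynomial ℂ)) (n + 1) *
        (1 - ((qm i i ^ n * qm i j * qm j i : (LaurentPolynomial ℂ)ˣ) : LaurentPolynomial ℂ))
        = 0)
    (S : Submonoid (LaurentPolynomial ℂ))
    (hS : S = Submonoid.closure {x : LaurentPolynomial ℂ |
      ∃ (i : Fin θ) (j : Fin θ) (hij : i ≠ j) (s : ℕ),
        s < Nat.find (hfin i j hij) ∧
        x = ((qm i i ^ s * qm i j * qm j i : (LaurentPolynomial ℂ)ˣ) : LaurentPolynomial ℂ)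
            - 1})
    (i j : Fin θ) (hij : i ≠ j) :
    ∀ lam : LaurentPolynomial ℂ,
      lam = (((qm i i ^ (Nat.find (hfin i j hij)) * qm i j * qm j i) ^
                (-(Nat.find (hfin i j hij) : ℤ)) : (LaurentPolynomial ℂ)ˣ) :
              LaurentPolynomial ℂ) *
            qFact ((qm i i : LaurentPolynomial ℂ)) (Nat.find (hfin i j hij)) *
            ∏ s ∈ Finset.range (Nat.find (hfin i j hij)),
              (((qm i i ^ s * qm i j * qm j i : (LaurentPolynomial ℂ)ˣ) :
                  LaurentPolynomial ℂ) - 1) →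
      lam ≠ 0 ∧ IsUnit (algebraMap (LaurentPolynomial ℂ) (Localization S) lam) := by
  rintro lam rfl
  set n := Nat.find (hfin i j hij)
  set q : LaurentPolynomial ℂ := ↑(qm i i)
  set a : LaurentPolynomial ℂ := ↑(qm i j * qm j i)
  have hval : ∀ s : ℕ,
      ((qm i i ^ s * qm i j * qm j i : (LaurentPolynomial ℂ)ˣ) : LaurentPolynomial ℂ) =
        q ^ s * a := by
    simp [q, a, mul_assoc]
  have hspec : qInt q (n + 1) * (1 - q ^ n * a) = 0 := hval n ▸ Nat.find_spec (hfin i j hij)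
  have hmin : ∀ s < n, qInt q (s + 1) * (1 - q ^ s * a) ≠ 0 :=
    fun s hs ↦ hval s ▸ Nat.find_min (hfin i j hij) hs
  have hmem : ∀ s < n, q ^ s * a - 1 ∈ S :=
    fun s hs ↦ hval s ▸ hS ▸ Submonoid.subset_closure ⟨i, j, hij, s, hs, rfl⟩
  have hN : IsUnit ((n + 1 : ℕ) : LaurentPolynomial ℂ) := by
    simpa using ((Nat.cast_ne_zero.mpr n.succ_ne_zero : ((n + 1 : ℕ) : ℂ) ≠ 0).isUnit).map
      (algebraMap ℂ (LaurentPolynomial ℂ))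
  simp only [hval]
  refine ⟨mul_ne_zero (mul_ne_zero (Units.ne_zero _) ?_) ?_, ?_⟩
  · exact qFact_ne_zero fun s hs ↦ left_ne_zero_of_mul (hmin s hs)
  · refine Finset.prod_ne_zero_iff.mpr fun s hs ↦ ?_
    rw [← neg_ne_zero, neg_sub]
    exact right_ne_zero_of_mul (hmin s (Finset.mem_range.mp hs))
  · have hloc : ∀ s < n,
        IsUnit (algebraMap (LaurentPolynomial ℂ) (Localization S) (q ^ s * a - 1)) :=
      fun s hs ↦ IsLocalization.map_units (Localization S) ⟨_, hmem s hs⟩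
    rw [map_mul, map_mul, map_prod]
    refine (((Units.isUnit _).map _).mul ?_).mul (IsUnit.prod_iff.mpr ?_)
    · exact isUnit_map_qFact _ (qm i i).isUnit hN hspec
        (fun s hs ↦ left_ne_zero_of_mul (hmin s hs)) hloc
    · exact fun s hs ↦ hloc s (Finset.mem_range.mp hs)

open scoped Classical in
/-- the element `λ_ij` is nonzero in `ℂ[ν^{±1}]` and becomes a unit in the
localization `𝒜`. -/
theorem stmt13 (θ : ℕ) (hθ : 2 ≤ θ)
    (qm : Fin θ → Fin θ → (LaurentPolynomial ℂ)ˣ)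
    (hfin : ∀ i j : Fin θ, i ≠ j → ∃ n : ℕ,
      qInt ((qm i i : LaurentPolynomial ℂ)) (n + 1) *
        (1 - ((qm i i ^ n * qm i j * qm j i : (LaurentPolynomial ℂ)ˣ) : LaurentPolynomial ℂ))
        = 0)
    (S : Submonoid (LaurentPolynomial ℂ))
    (hS : S = Submonoid.closure {x : LaurentPolynomial ℂ |
      ∃ (i : Fin θ) (j : Fin θ) (hij : i ≠ j) (s : ℕ),
        s < Nat.find (hfin i j hij) ∧
        x = ((qm i i ^ s * qm i j * qm j i : (LaurentPolynomial ℂ)ˣ) : LaurentPolynomial ℂ)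
            - 1})
    (i j : Fin θ) (hij : i ≠ j) :
    ∀ lam : LaurentPolynomial ℂ,
      lam = (((qm i i ^ (Nat.find (hfin i j hij)) * qm i j * qm j i) ^
                (-(Nat.find (hfin i j hij) : ℤ)) : (LaurentPolynomial ℂ)ˣ) :
              LaurentPolynomial ℂ) *
            qFact ((qm i i : LaurentPolynomial ℂ)) (Nat.find (hfin i j hij)) *
            ∏ s ∈ Finset.range (Nat.find (hfin i j hij)),
              (((qm i i ^ s * qm i j * qm j i : (LaurentPolynomial ℂ)ˣ) :
                  LaurentPolynomial ℂ) - 1) →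
      lam ≠ 0 ∧ IsUnit (algebraMap (LaurentPolynomial ℂ) (Localization S) lam) :=
  stmt13_general θ qm hfin S hS i j hij
end

section
/- For algebra characters z, z' : Z → ℂ, the convolution z∗z' : Z → ℂ defined by (z∗z')(a) := Σ z(a₍₁₎)·z'(a₍₂₎) (Sweedler notation for the comultiplication of Z) is again an algebra character; moreover Δ_H(I_{z∗z'}) ⊆ I_z ⊗ H + H ⊗ I_{z'} (as ℂ-subspaces of H ⊗ H). Consequently the comultiplication Δ_H induces a well-defined algebra homomorphism Δ_{z,z'} : H_{z∗z'} → H_z ⊗ H_{z'} satisfying Δ_{z,z'} ∘ p_{z∗z'} = (p_z ⊗ p_{z'}) ∘ Δ_H. -/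
/-!
Write `I ⊗ H + H ⊗ J` for `Ideal.tensorSup ℂ I J`. On a pure tensor,
`ι x ⊗ ι y - z x * z' y • 1 = ι (x - z x) ⊗ ι y + 1 ⊗ ι (z x • y - z x * z' y)`,
so by linearity `Δ (ι a) - (z ∗ z') a • 1 ∈ I_z ⊗ H + H ⊗ I_{z'}` for every `a : Z`. As `I_z` and
`I_{z'}` are left ideals, this subspace is stable under left multiplication, so the multiplicative
map `Δ` sends the left ideal generated by the `ι a` with `(z ∗ z') a = 0` into it. It is killed by
`p_z ⊗ p_{z'}`, hence `(p_z ⊗ p_{z'}) ∘ Δ` factors through `p_{z∗z'}`. That `z ∗ z'` is a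
character is the convolution product of algebra homomorphisms into a commutative algebra.
-/

open TensorProduct

namespace AlgHom

section Ring

variable {R A B C : Type*} [CommSemiring R] [Ring A] [Ring B] [Ring C]
  [Algebra R A] [Algebra R B] [Algebra R C]

theorem exists_comp_eq_of_surjective (f : A →ₐ[R] B) (hf : Function.Surjective f)
    (g : A →ₐ[R] C) (hfg : ∀ x, f x = 0 → g x = 0) : ∃ D : B →ₐ[R] C, ∀ x, D (f x) = g x := by
  let D : B →+* C := f.toRingHom.liftOfSurjective hf ⟨g.toRingHom, hfg⟩
  have hD (x : A) : D (f x) = g x :=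
    f.toRingHom.liftOfRightInverse_comp_apply _ _ ⟨g.toRingHom, hfg⟩ x
  refine ⟨{ D with commutes' := fun r => ?_ }, hD⟩
  simpa using hD (algebraMap R A r)

end Ring

theorem map_mem_of_mem_span {R A B : Type*} [CommSemiring R] [Semiring A] [Semiring B]
    [Algebra R A] [Algebra R B] (f : A →ₐ[R] B) {W : Submodule R B}
    (hW : ∀ t w, w ∈ W → t * w ∈ W) {s : Set A} (hs : ∀ x ∈ s, f x ∈ W) {x : A}
    (hx : x ∈ Ideal.span s) : f x ∈ W := by
  induction hx using Submodule.span_induction with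
  | mem x hx => exact hs x hx
  | zero => simp
  | add x y _ _ hx hy => simpa using add_mem hx hy
  | smul a x _ hx => simpa using hW (f a) _ hx

end AlgHom

namespace Ideal

variable (R : Type*) {A B : Type*} [CommRing R] [Ring A] [Algebra R A] [Ring B] [Algebra R B]

def tensorSup (I : Ideal A) (J : Ideal B) : Submodule R (A ⊗[R] B) :=
  LinearMap.range (TensorProduct.map (I.restrictScalars R).subtype LinearMap.id) ⊔
    LinearMap.range (TensorProduct.map LinearMap.id (J.restrictScalars R).subtype)

variable {R} {I : Ideal A} {J : Ideal B}

theorem tensorSup_eq_span :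
    tensorSup R I J =
      Submodule.span R ({t | ∃ i ∈ I, ∃ b, i ⊗ₜ b = t} ∪ {t | ∃ a, ∃ j ∈ J, a ⊗ₜ j = t}) := by
  simp only [tensorSup, range_map_eq_span_tmul, Submodule.span_union]
  congr 2 <;> ext t <;> simp [eq_comm]

theorem tmul_mem_tensorSup_left {i : A} (hi : i ∈ I) (b : B) : i ⊗ₜ[R] b ∈ tensorSup R I J := by
  rw [tensorSup_eq_span]; exact Submodule.subset_span (Or.inl ⟨i, hi, b, rfl⟩)

theorem tmul_mem_tensorSup_right (a : A) {j : B} (hj : j ∈ J) : a ⊗ₜ[R] j ∈ tensorSup R I J := by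
  rw [tensorSup_eq_span]; exact Submodule.subset_span (Or.inr ⟨a, j, hj, rfl⟩)

theorem mul_mem_tensorSup (t : A ⊗[R] B) {w : A ⊗[R] B} (hw : w ∈ tensorSup R I J) :
    t * w ∈ tensorSup R I J := by
  rw [tensorSup_eq_span] at hw
  induction hw using Submodule.span_induction with
  | mem w hw =>
    induction t using TensorProduct.induction_on with
    | zero => simp
    | tmul a b =>
      rcases hw with ⟨i, hi, b', rfl⟩ | ⟨a', j, hj, rfl⟩ <;>
        rw [Algebra.TensorProduct.tmul_mul_tmul]
      · exact tmul_mem_tensorSup_left (I.mul_mem_left a hi) (b * b')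
      · exact tmul_mem_tensorSup_right (a * a') (J.mul_mem_left b hj)
    | add t₁ t₂ h₁ h₂ => simpa [add_mul] using add_mem h₁ h₂
  | zero => simp
  | add x y _ _ hx hy => simpa [mul_add] using add_mem hx hy
  | smul r x _ hx => simpa using Submodule.smul_mem _ r hx

theorem map_eq_zero_of_mem_tensorSup {C D : Type*} [Ring C] [Algebra R C] [Ring D] [Algebra R D]
    {f : A →ₐ[R] C} {g : B →ₐ[R] D} (hf : ∀ i ∈ I, f i = 0) (hg : ∀ j ∈ J, g j = 0)
    {w : A ⊗[R] B} (hw : w ∈ tensorSup R I J) : Algebra.TensorProduct.map f g w = 0 := by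
  rw [tensorSup_eq_span] at hw
  refine Submodule.span_le (p := LinearMap.ker (Algebra.TensorProduct.map f g).toLinearMap).2
    ?_ hw
  rintro _ (⟨i, hi, b, rfl⟩ | ⟨a, j, hj, rfl⟩)
  · simp [hf i hi]
  · simp [hg j hj]

theorem map_sub_smul_one_mem_tensorSup {X Y : Type*} [Ring X] [Algebra R X] [Ring Y] [Algebra R Y]
    {φ : X →ₐ[R] A} {ψ : Y →ₐ[R] B} {χ : X →ₐ[R] R} {χ' : Y →ₐ[R] R}
    (hI : ∀ x, χ x = 0 → φ x ∈ I) (hJ : ∀ y, χ' y = 0 → ψ y ∈ J) (c : X ⊗[R] Y) :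
    TensorProduct.map φ.toLinearMap ψ.toLinearMap c
        - LinearMap.mul' R R (TensorProduct.map χ.toLinearMap χ'.toLinearMap c) • 1
      ∈ tensorSup R I J := by
  induction c using TensorProduct.induction_on with
  | zero => simp
  | tmul x y =>
    have hx : φ (x - χ x • 1) ∈ I := hI _ (by simp)
    have hy : ψ (χ x • y - (χ x * χ' y) • 1) ∈ J := hJ _ (by simp [mul_comm])
    convert add_mem (tmul_mem_tensorSup_left (R := R) (J := J) hx (ψ y))
      (tmul_mem_tensorSup_right (R := R) (I := I) 1 hy) using 1
    simp only [TensorProduct.map_tmul, LinearMap.mul'_apply, AlgHom.toLinearMap_apply,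
      map_sub, map_smul, map_one, sub_tmul, tmul_sub, smul_tmul', tmul_smul,
      Algebra.TensorProduct.one_def]
    abel
  | add c₁ c₂ h₁ h₂ => simpa [sub_add_sub_comm, add_smul] using add_mem h₁ h₂

end Ideal

theorem stmt14_general
    (H : Type*) [Ring H] [HopfAlgebra ℂ H]
    (Z : Type*) [CommRing Z] [HopfAlgebra ℂ Z]
    (ι : Z →ₐ[ℂ] H)
    (hcomul : ∀ a : Z, Coalgebra.comul (R := ℂ) (ι a) =
        TensorProduct.map ι.toLinearMap ι.toLinearMap (Coalgebra.comul (R := ℂ) a))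
    (z z' : Z →ₐ[ℂ] ℂ)
    -- the quotient algebras H_z, H_{z'} and H_{z∗z'}
    (Hz Hz' Hc : Type*) [Ring Hz] [Algebra ℂ Hz] [Ring Hz'] [Algebra ℂ Hz']
    [Ring Hc] [Algebra ℂ Hc]
    (pz : H →ₐ[ℂ] Hz)
    (hpzker : ∀ x : H, pz x = 0 ↔ x ∈ Ideal.span (ι '' {a : Z | z a = 0}))
    (pz' : H →ₐ[ℂ] Hz')
    (hpz'ker : ∀ x : H, pz' x = 0 ↔ x ∈ Ideal.span (ι '' {a : Z | z' a = 0}))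
    (pc : H →ₐ[ℂ] Hc) (hpc : Function.Surjective pc)
    (hpcker : ∀ x : H, pc x = 0 ↔ x ∈ Ideal.span (ι '' {a : Z |
        LinearMap.mul' ℂ ℂ (TensorProduct.map z.toLinearMap z'.toLinearMap
          (Coalgebra.comul (R := ℂ) a)) = 0})) :
    -- (1) the convolution z ∗ z' is again an algebra character
    (∃ χ : Z →ₐ[ℂ] ℂ, ∀ a : Z,
        χ a = LinearMap.mul' ℂ ℂ (TensorProduct.map z.toLinearMap z'.toLinearMap
          (Coalgebra.comul (R := ℂ) a))) ∧
    -- (2) Δ_H(I_{z∗z'}) ⊆ I_z ⊗ H + H ⊗ I_{z'}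
    (∀ x : H, x ∈ Ideal.span (ι '' {a : Z |
        LinearMap.mul' ℂ ℂ (TensorProduct.map z.toLinearMap z'.toLinearMap
          (Coalgebra.comul (R := ℂ) a)) = 0}) →
      Coalgebra.comul (R := ℂ) x ∈
        LinearMap.range (TensorProduct.map
            ((Ideal.span (ι '' {a : Z | z a = 0})).restrictScalars ℂ).subtype
            (LinearMap.id : H →ₗ[ℂ] H)) ⊔
        LinearMap.range (TensorProduct.map (LinearMap.id : H →ₗ[ℂ] H)
            ((Ideal.span (ι '' {a : Z | z' a = 0})).restrictScalars ℂ).subtype)) ∧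
    -- (3) the induced algebra homomorphism Δ_{z,z'}
    (∃ D : Hc →ₐ[ℂ] Hz ⊗[ℂ] Hz', ∀ x : H,
        D (pc x) = Algebra.TensorProduct.map pz pz' (Bialgebra.comulAlgHom ℂ H x)) := by
  set Iz := Ideal.span (ι '' {a : Z | z a = 0})
  set Iz' := Ideal.span (ι '' {a : Z | z' a = 0})
  have hz (b : Z) (hb : z b = 0) : ι b ∈ Iz := Ideal.subset_span ⟨b, hb, rfl⟩
  have hz' (b : Z) (hb : z' b = 0) : ι b ∈ Iz' := Ideal.subset_span ⟨b, hb, rfl⟩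
  have comul_mem (x : H) (hx : pc x = 0) :
      Coalgebra.comul (R := ℂ) x ∈ Ideal.tensorSup ℂ Iz Iz' := by
    refine (Bialgebra.comulAlgHom ℂ H).map_mem_of_mem_span Ideal.mul_mem_tensorSup ?_
      ((hpcker x).1 hx)
    rintro _ ⟨a, ha, rfl⟩
    simpa [hcomul, ha.out] using
      Ideal.map_sub_smul_one_mem_tensorSup hz hz' (Coalgebra.comul (R := ℂ) a)
  obtain ⟨D, hD⟩ := pc.exists_comp_eq_of_surjective hpc
    ((Algebra.TensorProduct.map pz pz').comp (Bialgebra.comulAlgHom ℂ H)) fun x hx =>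
      Ideal.map_eq_zero_of_mem_tensorSup (fun i hi => (hpzker i).2 hi)
        (fun j hj => (hpz'ker j).2 hj) (comul_mem x hx)
  exact ⟨⟨(WithConv.toConv z * WithConv.toConv z').ofConv, fun a => rfl⟩,
    fun x hx => comul_mem x ((hpcker x).2 hx), D, hD⟩

/-- the convolution `z ∗ z'` of two algebra characters of a central
Hopf subalgebra `Z ⊆ H` is again an algebra character, the comultiplication satisfies
`Δ_H(I_{z∗z'}) ⊆ I_z ⊗ H + H ⊗ I_{z'}`, and consequently `Δ_H` induces an algebra
homomorphism `Δ_{z,z'} : H_{z∗z'} → H_z ⊗ H_{z'}` with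
`Δ_{z,z'} ∘ p_{z∗z'} = (p_z ⊗ p_{z'}) ∘ Δ_H`. -/
theorem stmt14
    (H : Type*) [Ring H] [HopfAlgebra ℂ H]
    (Z : Type*) [CommRing Z] [HopfAlgebra ℂ Z]
    (ι : Z →ₐ[ℂ] H) (hinj : Function.Injective ι)
    (hcent : ∀ (a : Z) (x : H), ι a * x = x * ι a)
    (hcomul : ∀ a : Z, Coalgebra.comul (R := ℂ) (ι a) =
        TensorProduct.map ι.toLinearMap ι.toLinearMap (Coalgebra.comul (R := ℂ) a))
    (hcounit : ∀ a : Z, Coalgebra.counit (R := ℂ) (ι a) = Coalgebra.counit (R := ℂ) a)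
    (hanti : ∀ a : Z, HopfAlgebra.antipode (R := ℂ) (ι a) = ι (HopfAlgebra.antipode (R := ℂ) a))
    (z z' : Z →ₐ[ℂ] ℂ)
    -- the quotient algebras H_z, H_{z'} and H_{z∗z'}
    (Hz Hz' Hc : Type*) [Ring Hz] [Algebra ℂ Hz] [Ring Hz'] [Algebra ℂ Hz']
    [Ring Hc] [Algebra ℂ Hc]
    (pz : H →ₐ[ℂ] Hz) (hpz : Function.Surjective pz)
    (hpzker : ∀ x : H, pz x = 0 ↔ x ∈ Ideal.span (ι '' {a : Z | z a = 0}))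
    (pz' : H →ₐ[ℂ] Hz') (hpz' : Function.Surjective pz')
    (hpz'ker : ∀ x : H, pz' x = 0 ↔ x ∈ Ideal.span (ι '' {a : Z | z' a = 0}))
    (pc : H →ₐ[ℂ] Hc) (hpc : Function.Surjective pc)
    (hpcker : ∀ x : H, pc x = 0 ↔ x ∈ Ideal.span (ι '' {a : Z |
        LinearMap.mul' ℂ ℂ (TensorProduct.map z.toLinearMap z'.toLinearMap
          (Coalgebra.comul (R := ℂ) a)) = 0})) :
    -- (1) the convolution z ∗ z' is again an algebra character
    (∃ χ : Z →ₐ[ℂ] ℂ, ∀ a : Z,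
        χ a = LinearMap.mul' ℂ ℂ (TensorProduct.map z.toLinearMap z'.toLinearMap
          (Coalgebra.comul (R := ℂ) a))) ∧
    -- (2) Δ_H(I_{z∗z'}) ⊆ I_z ⊗ H + H ⊗ I_{z'}
    (∀ x : H, x ∈ Ideal.span (ι '' {a : Z |
        LinearMap.mul' ℂ ℂ (TensorProduct.map z.toLinearMap z'.toLinearMap
          (Coalgebra.comul (R := ℂ) a)) = 0}) →
      Coalgebra.comul (R := ℂ) x ∈
        LinearMap.range (TensorProduct.map
            ((Ideal.span (ι '' {a : Z | z a = 0})).restrictScalars ℂ).subtype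
            (LinearMap.id : H →ₗ[ℂ] H)) ⊔
        LinearMap.range (TensorProduct.map (LinearMap.id : H →ₗ[ℂ] H)
            ((Ideal.span (ι '' {a : Z | z' a = 0})).restrictScalars ℂ).subtype)) ∧
    -- (3) the induced algebra homomorphism Δ_{z,z'}
    (∃ D : Hc →ₐ[ℂ] Hz ⊗[ℂ] Hz', ∀ x : H,
        D (pc x) = Algebra.TensorProduct.map pz pz' (Bialgebra.comulAlgHom ℂ H x)) :=
  stmt14_general H Z ι hcomul z z' Hz Hz' Hc pz hpzker pz' hpz'ker pc hpc hpcker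
end

section
/- Suppose the right K-comodule algebra H (with coaction ρ) is cleft, i.e., there exists a convolution-invertible ℂ-linear map χ : K → H which is a morphism of right K-comodules: ρ ∘ χ = (χ ⊗ id_K) ∘ Δ_K. Then for every algebra character z : Z → ℂ, the map χ_z := p_z ∘ χ : K → H_z is a convolution-invertible morphism of right K-comodules: ρ_z ∘ χ_z = (χ_z ⊗ id_K) ∘ Δ_K, and there exists χ_z' : K → H_z with χ_z ∗ χ_z' = χ_z' ∗ χ_z = u_{H_z} ∘ ε_K. (Thus each H_z is a cleft K-comodule algebra.) -/
/-!
The projection `p_z` is an algebra map intertwining the coactions `ρ = (id ⊗ p_ε) ∘ Δ_H` and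
`ρ_z`, so `χ_z = p_z ∘ χ` is a composite of comodule morphisms. Post-composition with an algebra
map is multiplicative for convolution and preserves its unit, so it carries the convolution
inverse of `χ` to one of `χ_z`.
-/

open scoped TensorProduct

open WithConv

section Coaction

variable {R M N P K : Type*} [CommSemiring R] [AddCommMonoid M] [AddCommMonoid N]
  [AddCommMonoid P] [AddCommMonoid K] [Module R M] [Module R N] [Module R P] [Module R K]

def IsCoactionHom (ρM : M →ₗ[R] M ⊗[R] K) (ρN : N →ₗ[R] N ⊗[R] K) (f : M →ₗ[R] N) : Prop :=
  ∀ m, ρN (f m) = f.rTensor K (ρM m)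

theorem IsCoactionHom.comp {ρM : M →ₗ[R] M ⊗[R] K} {ρN : N →ₗ[R] N ⊗[R] K}
    {ρP : P →ₗ[R] P ⊗[R] K} {f : M →ₗ[R] N} {g : N →ₗ[R] P}
    (hg : IsCoactionHom ρN ρP g) (hf : IsCoactionHom ρM ρN f) :
    IsCoactionHom ρM ρP (g ∘ₗ f) := fun m => by
  rw [LinearMap.comp_apply, hg, hf, ← LinearMap.comp_apply (g.rTensor K), ← LinearMap.rTensor_comp]

end Coaction

section Convolution

variable {R A B C : Type*} [CommSemiring R] [Semiring A] [Semiring B] [Algebra R A] [Algebra R B]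
  [AddCommMonoid C] [Module R C] [Coalgebra R C]

def AlgHom.compConvMonoidHom (h : A →ₐ[R] B) :
    WithConv (C →ₗ[R] A) →* WithConv (C →ₗ[R] B) where
  toFun f := toConv (h.toLinearMap ∘ₗ f.ofConv)
  map_one' := by ext c; simp
  map_mul' f g := ofConv_injective (LinearMap.algHom_comp_convMul_distrib h f g)

end Convolution

theorem stmt16_general
    (H : Type*) [Ring H] [HopfAlgebra ℂ H]
    (K : Type*) [Ring K] [Bialgebra ℂ K]
    (pe : H →ₐ[ℂ] K)
    -- `χ` is a convolution-invertible morphism of right `K`-comodules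
    (χ : K →ₗ[ℂ] H)
    (hχ_comod : ∀ k : K,
        TensorProduct.map (LinearMap.id : H →ₗ[ℂ] H) pe.toLinearMap
            (Coalgebra.comul (R := ℂ) (χ k)) =
          TensorProduct.map χ (LinearMap.id : K →ₗ[ℂ] K) (Coalgebra.comul (R := ℂ) k))
    (χinv : K →ₗ[ℂ] H)
    (hχinv₁ : ∀ k : K, LinearMap.mul' ℂ H
        (TensorProduct.map χ χinv (Coalgebra.comul (R := ℂ) k)) =
        algebraMap ℂ H (Coalgebra.counit (R := ℂ) k))
    (hχinv₂ : ∀ k : K, LinearMap.mul' ℂ H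
        (TensorProduct.map χinv χ (Coalgebra.comul (R := ℂ) k)) =
        algebraMap ℂ H (Coalgebra.counit (R := ℂ) k))
    -- a character `z` and the corresponding quotient comodule algebra `H_z`
    (Hz : Type*) [Ring Hz] [Algebra ℂ Hz]
    (pz : H →ₐ[ℂ] Hz)
    (ρz : Hz →ₗ[ℂ] Hz ⊗[ℂ] K)
    (hρz : ∀ x : H, ρz (pz x) =
        TensorProduct.map pz.toLinearMap pe.toLinearMap (Coalgebra.comul (R := ℂ) x)) :
    -- `χ_z = p_z ∘ χ` is a morphism of right `K`-comodules …
    (∀ k : K, ρz (pz (χ k)) =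
        TensorProduct.map (pz.toLinearMap ∘ₗ χ) (LinearMap.id : K →ₗ[ℂ] K)
          (Coalgebra.comul (R := ℂ) k)) ∧
    -- … and is convolution-invertible
    (∃ χ' : K →ₗ[ℂ] Hz,
        (∀ k : K, LinearMap.mul' ℂ Hz
            (TensorProduct.map (pz.toLinearMap ∘ₗ χ) χ' (Coalgebra.comul (R := ℂ) k)) =
            algebraMap ℂ Hz (Coalgebra.counit (R := ℂ) k)) ∧
        (∀ k : K, LinearMap.mul' ℂ Hz
            (TensorProduct.map χ' (pz.toLinearMap ∘ₗ χ) (Coalgebra.comul (R := ℂ) k)) =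
            algebraMap ℂ Hz (Coalgebra.counit (R := ℂ) k))) := by
  let ρ : H →ₗ[ℂ] H ⊗[ℂ] K := pe.toLinearMap.lTensor H ∘ₗ Coalgebra.comul
  have hpz : IsCoactionHom ρ ρz pz.toLinearMap := fun x => by
    rw [AlgHom.toLinearMap_apply, hρz, ← LinearMap.rTensor_comp_lTensor]; rfl
  have hχ_unit : IsUnit (toConv χ) :=
    isUnit_iff_exists.2 ⟨toConv χinv, by ext k; exact hχinv₁ k, by ext k; exact hχinv₂ k⟩
  obtain ⟨χ', hright, hleft⟩ := isUnit_iff_exists.1 (hχ_unit.map (pz.compConvMonoidHom (C := K)))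
  exact ⟨hpz.comp hχ_comod, χ'.ofConv, fun k => congr($hright k), fun k => congr($hleft k)⟩

/-- if the right `K`-comodule algebra `H` (coaction `ρ = (id ⊗ p_ε) ∘ Δ_H`)
is cleft via a convolution-invertible comodule morphism `χ : K → H`, then for every
algebra character `z : Z → ℂ` the map `χ_z = p_z ∘ χ : K → H_z` is a convolution-invertible
morphism of right `K`-comodules; thus each `H_z` is a cleft `K`-comodule algebra. -/
theorem stmt16
    (H : Type*) [Ring H] [HopfAlgebra ℂ H]
    (Z : Type*) [CommRing Z] [HopfAlgebra ℂ Z]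
    (ι : Z →ₐ[ℂ] H) (hinj : Function.Injective ι)
    (hcent : ∀ (a : Z) (x : H), ι a * x = x * ι a)
    (K : Type*) [Ring K] [Bialgebra ℂ K]
    (pe : H →ₐ[ℂ] K) (hpe : Function.Surjective pe)
    (hpe_comul : ∀ x : H, Coalgebra.comul (R := ℂ) (pe x) =
        TensorProduct.map pe.toLinearMap pe.toLinearMap (Coalgebra.comul (R := ℂ) x))
    (hpe_counit : ∀ x : H, Coalgebra.counit (R := ℂ) (pe x) = Coalgebra.counit (R := ℂ) x)
    (hpe_ker : ∀ x : H, pe x = 0 ↔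
        x ∈ Ideal.span (ι '' {a : Z | Coalgebra.counit (R := ℂ) a = (0 : ℂ)}))
    -- `χ` is a convolution-invertible morphism of right `K`-comodules
    (χ : K →ₗ[ℂ] H)
    (hχ_comod : ∀ k : K,
        TensorProduct.map (LinearMap.id : H →ₗ[ℂ] H) pe.toLinearMap
            (Coalgebra.comul (R := ℂ) (χ k)) =
          TensorProduct.map χ (LinearMap.id : K →ₗ[ℂ] K) (Coalgebra.comul (R := ℂ) k))
    (χinv : K →ₗ[ℂ] H)
    (hχinv₁ : ∀ k : K, LinearMap.mul' ℂ H
        (TensorProduct.map χ χinv (Coalgebra.comul (R := ℂ) k)) =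
        algebraMap ℂ H (Coalgebra.counit (R := ℂ) k))
    (hχinv₂ : ∀ k : K, LinearMap.mul' ℂ H
        (TensorProduct.map χinv χ (Coalgebra.comul (R := ℂ) k)) =
        algebraMap ℂ H (Coalgebra.counit (R := ℂ) k))
    -- a character `z` and the corresponding quotient comodule algebra `H_z`
    (z : Z →ₐ[ℂ] ℂ)
    (Hz : Type*) [Ring Hz] [Algebra ℂ Hz]
    (pz : H →ₐ[ℂ] Hz) (hpz : Function.Surjective pz)
    (hpz_ker : ∀ x : H, pz x = 0 ↔ x ∈ Ideal.span (ι '' {a : Z | z a = 0}))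
    (ρz : Hz →ₗ[ℂ] Hz ⊗[ℂ] K)
    (hρz : ∀ x : H, ρz (pz x) =
        TensorProduct.map pz.toLinearMap pe.toLinearMap (Coalgebra.comul (R := ℂ) x)) :
    -- `χ_z = p_z ∘ χ` is a morphism of right `K`-comodules …
    (∀ k : K, ρz (pz (χ k)) =
        TensorProduct.map (pz.toLinearMap ∘ₗ χ) (LinearMap.id : K →ₗ[ℂ] K)
          (Coalgebra.comul (R := ℂ) k)) ∧
    -- … and is convolution-invertible
    (∃ χ' : K →ₗ[ℂ] Hz,
        (∀ k : K, LinearMap.mul' ℂ Hz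
            (TensorProduct.map (pz.toLinearMap ∘ₗ χ) χ' (Coalgebra.comul (R := ℂ) k)) =
            algebraMap ℂ Hz (Coalgebra.counit (R := ℂ) k)) ∧
        (∀ k : K, LinearMap.mul' ℂ Hz
            (TensorProduct.map χ' (pz.toLinearMap ∘ₗ χ) (Coalgebra.comul (R := ℂ) k)) =
            algebraMap ℂ Hz (Coalgebra.counit (R := ℂ) k))) :=
  stmt16_general H K pe χ hχ_comod χinv hχinv₁ hχinv₂ Hz pz ρz hρz
end

section
/- Let F → K be a faithfully flat homomorphism of commutative rings, J a set, U an F-algebra, π : T_F(J) → U a surjective F-algebra homomorphism from the free F-algebra on J, and (r_t)_{t∈T} a family of elements of T_F(J). Let ϕ : T_F(J) → T_K(J) be the map induced by the base change F → K (sending each generator to the corresponding generator), and let π_K : T_K(J) → K ⊗_F U be the K-algebra homomorphism with π_K(x_j) = 1 ⊗ π(x_j) for each generator x_j. Then the two-sided ideal of T_F(J) generated by {r_t : t ∈ T} equals ker π if and only if the two-sided ideal of T_K(J) generated by {ϕ(r_t) : t ∈ T} equals ker π_K. -/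
open scoped TensorProduct

/-!
Let `I` be the two-sided ideal generated by the `r_t` and `q : T_F(J) → T_F(J)/I` the quotient
map. Under `K ⊗_F T_F(J) ≅ T_K(J)`, which sends `1 ⊗ a` to `ϕ a`, the map `π_K` becomes `K ⊗ π`,
and right exactness of `K ⊗_F -` identifies the ideal generated by the `ϕ r_t` with
`ker (K ⊗ q)`. Flatness gives `ker (K ⊗ f) = K ⊗ ker f`, and faithful flatness makes
`N ↦ K ⊗ N` injective on submodules; so `ker q = ker π` iff `ker (K ⊗ q) = ker (K ⊗ π)`.
-/

theorem LinearMap.ker_baseChange {R M N : Type*} (A : Type*) [CommRing R] [CommRing A]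
    [Algebra R A] [Module.Flat R A] [AddCommGroup M] [Module R M] [AddCommGroup N] [Module R N]
    (f : M →ₗ[R] N) :
    LinearMap.ker (f.baseChange A) = (LinearMap.ker f).baseChange A :=
  Module.Flat.ker_lTensor_eq A A f

namespace FreeAlgebra

variable (R A X : Type*) [CommSemiring R] [CommSemiring A] [Algebra R A]

noncomputable def algebraTensorAlgEquiv : A ⊗[R] FreeAlgebra R X ≃ₐ[A] FreeAlgebra A X :=
  AlgEquiv.ofAlgHom
    (AlgHom.liftEquiv R A _ _ (FreeAlgebra.lift R (ι A)))
    (FreeAlgebra.lift A fun x ↦ 1 ⊗ₜ ι R x)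
    (by ext; simp)
    (by ext; simp)

@[simp]
lemma algebraTensorAlgEquiv_one_tmul_ι (x : X) :
    algebraTensorAlgEquiv R A X (1 ⊗ₜ ι R x) = ι A x := by
  simp [algebraTensorAlgEquiv]

@[simp]
lemma algebraTensorAlgEquiv_tmul_one (a : A) :
    algebraTensorAlgEquiv R A X (a ⊗ₜ 1) = algebraMap A _ a := by
  simpa using (algebraTensorAlgEquiv R A X).commutes a

variable {R X}

lemma ringHom_ext {S : Type*} [Semiring S] {f g : FreeAlgebra R X →+* S}
    (hι : ∀ x, f (ι R x) = g (ι R x))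
    (halg : ∀ r, f (algebraMap R _ r) = g (algebraMap R _ r)) : f = g := by
  ext a
  induction a using FreeAlgebra.induction with
  | grade0 r => exact halg r
  | grade1 x => exact hι x
  | mul a b ha hb => rw [map_mul, map_mul, ha, hb]
  | add a b ha hb => rw [map_add, map_add, ha, hb]

end FreeAlgebra

section

variable {R S T : Type*} [Ring R] [Ring S] [NonAssocRing T]

lemma RingEquiv.mapTwoSidedIdeal_span (e : R ≃+* S) (s : Set R) :
    e.mapTwoSidedIdeal (TwoSidedIdeal.span s) = TwoSidedIdeal.span (e '' s) := by
  refine le_antisymm ?_ (TwoSidedIdeal.span_le.mpr ?_)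
  · rw [← OrderIso.le_symm_apply, RingEquiv.mapTwoSidedIdeal_symm,
      RingEquiv.mapTwoSidedIdeal_apply, TwoSidedIdeal.span_le]
    intro x hx
    simpa [TwoSidedIdeal.mem_comap] using TwoSidedIdeal.subset_span (Set.mem_image_of_mem e hx)
  · rintro - ⟨x, hx, rfl⟩
    simpa [RingEquiv.mapTwoSidedIdeal_apply, TwoSidedIdeal.mem_comap] using
      TwoSidedIdeal.subset_span hx

lemma RingEquiv.mapTwoSidedIdeal_ker (e : R ≃+* S) (f : S →+* T) :
    e.mapTwoSidedIdeal (TwoSidedIdeal.ker (f.comp e)) = TwoSidedIdeal.ker f := by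
  ext x
  simp [RingEquiv.mapTwoSidedIdeal_apply, TwoSidedIdeal.mem_comap, TwoSidedIdeal.mem_ker]

lemma RingEquiv.span_image_eq_ker_iff (e : R ≃+* S) (s : Set R) (f : S →+* T) :
    TwoSidedIdeal.span (e '' s) = TwoSidedIdeal.ker f ↔
      TwoSidedIdeal.span s = TwoSidedIdeal.ker (f.comp e) := by
  rw [← e.mapTwoSidedIdeal.injective.eq_iff, e.mapTwoSidedIdeal_span, e.mapTwoSidedIdeal_ker]

end

lemma TwoSidedIdeal.ker_eq_ker_iff_linearMapKer_eq {R A C D : Type*} [CommSemiring R] [Ring A] [Algebra R A]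
    [Ring C] [Algebra R C] [Ring D] [Algebra R D] {f : A →ₐ[R] C} {g : A →ₐ[R] D} :
    TwoSidedIdeal.ker f = TwoSidedIdeal.ker g ↔
      LinearMap.ker f.toLinearMap = LinearMap.ker g.toLinearMap := by
  simp [SetLike.ext_iff, TwoSidedIdeal.mem_ker]

namespace Algebra.TensorProduct

open TwoSidedIdeal

variable {R S A C : Type*} [CommRing R] [CommRing S] [Algebra R S] [Ring A] [Algebra R A]
  [Ring C] [Algebra R C]

theorem ker_map_id_eq_span_includeRight_image {f : A →ₐ[R] C} (hf : Function.Surjective f)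
    {s : Set A} (hs : span s = ker f) :
    ker (map (AlgHom.id S S) f) = span (includeRight '' s : Set (S ⊗[R] A)) := by
  refine le_antisymm (fun x hx ↦ ?_) (span_le.mpr ?_)
  · have hexact := lTensor_exact S (LinearMap.exact_subtype_ker_map f.toLinearMap) hf
    obtain ⟨y, rfl⟩ := (hexact x).mp ((mem_ker (map (AlgHom.id S S) f)).mp hx)
    clear hx
    have hspan : span s ≤ (span (includeRight '' s : Set (S ⊗[R] A))).comap includeRight :=
      span_le.mpr fun a ha ↦ (mem_comap _).mpr (subset_span (Set.mem_image_of_mem _ ha))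
    induction y using TensorProduct.induction_on with
    | zero => simp
    | tmul c a =>
      have ha : includeRight (a : A) ∈ span (includeRight '' s : Set (S ⊗[R] A)) :=
        (mem_comap _).mp (hspan (hs ▸ (mem_ker f).mpr a.2))
      have hca : c ⊗ₜ[R] (a : A) = c ⊗ₜ 1 * includeRight (a : A) := by simp
      rw [LinearMap.lTensor_tmul, Submodule.subtype_apply, hca]
      exact mul_mem_left _ _ _ ha
    | add y z hy hz => simpa using add_mem _ hy hz
  · rintro - ⟨a, ha, rfl⟩
    have : f a = 0 := (mem_ker f).mp (hs ▸ subset_span ha)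
    simp [mem_ker, this]

variable {D : Type*} [Ring D] [Algebra R D]

theorem ker_map_id_eq_ker_map_id_iff [Module.FaithfullyFlat R S] (f : A →ₐ[R] C)
    (g : A →ₐ[R] D) :
    ker (map (AlgHom.id S S) f) = ker (map (AlgHom.id S S) g) ↔ ker f = ker g := by
  have hf : LinearMap.ker (map (AlgHom.id S S) f).toLinearMap =
      (LinearMap.ker f.toLinearMap).baseChange S :=
    LinearMap.ker_baseChange S f.toLinearMap
  have hg : LinearMap.ker (map (AlgHom.id S S) g).toLinearMap =
      (LinearMap.ker g.toLinearMap).baseChange S :=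
    LinearMap.ker_baseChange S g.toLinearMap
  rw [TwoSidedIdeal.ker_eq_ker_iff_linearMapKer_eq, TwoSidedIdeal.ker_eq_ker_iff_linearMapKer_eq,
    hf, hg, Submodule.baseChange_inj]

end Algebra.TensorProduct

theorem stmt17_general
    (F K : Type*) [CommRing F] [CommRing K] [Algebra F K] [Module.FaithfullyFlat F K]
    (J : Type*) (U : Type*) [Ring U] [Algebra F U]
    (π : FreeAlgebra F J →ₐ[F] U)
    (T : Type*) (r : T → FreeAlgebra F J)
    (ϕ : FreeAlgebra F J →+* FreeAlgebra K J)
    (hϕι : ∀ j : J, ϕ (FreeAlgebra.ι F j) = FreeAlgebra.ι K j)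
    (hϕsc : ∀ a : F, ϕ (algebraMap F (FreeAlgebra F J) a) =
        algebraMap K (FreeAlgebra K J) (algebraMap F K a))
    (πK : FreeAlgebra K J →ₐ[K] K ⊗[F] U)
    (hπK : ∀ j : J, πK (FreeAlgebra.ι K j) = (1 : K) ⊗ₜ[F] π (FreeAlgebra.ι F j)) :
    TwoSidedIdeal.span (Set.range r) = TwoSidedIdeal.ker (π : FreeAlgebra F J →+* U) ↔
    TwoSidedIdeal.span (ϕ '' Set.range r) =
      TwoSidedIdeal.ker (πK : FreeAlgebra K J →+* K ⊗[F] U) := by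
  open Algebra.TensorProduct in
  let e := FreeAlgebra.algebraTensorAlgEquiv F K J
  have he : (e : K ⊗[F] FreeAlgebra F J →+* FreeAlgebra K J).comp includeRight.toRingHom = ϕ :=
    FreeAlgebra.ringHom_ext (by simp [e, hϕι]) (by simp [e, hϕsc])
  have hπKe : πK.comp e = map (AlgHom.id K K) π := by
    ext j
    simp [e, hπK]
  let I := TwoSidedIdeal.span (Set.range r)
  let q := RingCon.mkₐ F I.ringCon
  have hq : TwoSidedIdeal.ker q = I := I.ker_ringCon_mk'
  calc I = TwoSidedIdeal.ker π ↔ TwoSidedIdeal.ker q = TwoSidedIdeal.ker π := by rw [hq]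
    _ ↔ TwoSidedIdeal.ker (map (AlgHom.id K K) q) = TwoSidedIdeal.ker (map (AlgHom.id K K) π) :=
      (ker_map_id_eq_ker_map_id_iff q π).symm
    _ ↔ TwoSidedIdeal.span (includeRight (A := K) '' Set.range r) =
        TwoSidedIdeal.ker (πK.comp e.toAlgHom) := by
      rw [ker_map_id_eq_span_includeRight_image (RingCon.mkₐ_surjective _) hq.symm, ← hπKe]
    _ ↔ _ := by
      rw [← he, RingHom.coe_comp, Set.image_comp]
      exact (RingEquiv.span_image_eq_ker_iff e.toRingEquiv _ _).symm

/-- for a faithfully flat base change `F → K`, a family `(r_t)` of elements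
of the free algebra `T_F(J)` generates the kernel of the presentation `π : T_F(J) → U`
(as a two-sided ideal) if and only if its image generates the kernel of the base-changed
presentation `π_K : T_K(J) → K ⊗_F U`. -/
theorem stmt17
    (F K : Type*) [CommRing F] [CommRing K] [Algebra F K] [Module.FaithfullyFlat F K]
    (J : Type*) (U : Type*) [Ring U] [Algebra F U]
    (π : FreeAlgebra F J →ₐ[F] U) (hπ : Function.Surjective π)
    (T : Type*) (r : T → FreeAlgebra F J)
    (ϕ : FreeAlgebra F J →+* FreeAlgebra K J)
    (hϕι : ∀ j : J, ϕ (FreeAlgebra.ι F j) = FreeAlgebra.ι K j)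
    (hϕsc : ∀ a : F, ϕ (algebraMap F (FreeAlgebra F J) a) =
        algebraMap K (FreeAlgebra K J) (algebraMap F K a))
    (πK : FreeAlgebra K J →ₐ[K] K ⊗[F] U)
    (hπK : ∀ j : J, πK (FreeAlgebra.ι K j) = (1 : K) ⊗ₜ[F] π (FreeAlgebra.ι F j)) :
    TwoSidedIdeal.span (Set.range r) = TwoSidedIdeal.ker (π : FreeAlgebra F J →+* U) ↔
    TwoSidedIdeal.span (ϕ '' Set.range r) =
      TwoSidedIdeal.ker (πK : FreeAlgebra K J →+* K ⊗[F] U) :=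
  stmt17_general F K J U π T r ϕ hϕι hϕsc πK hπK
end
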